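/- arXiv:1403.0494 — 5 statements merged into one kernel-verified Lean document; each statement's English description precedes it below -/
import Mathlib

section
/- Let G be a finite set of C¹ diffeomorphisms of ℝ, closed under taking inverses, with every g ∈ G having everywhere positive derivative. Assume moreover: (a) there is a constant C₀ ≥ 1 with 1/C₀ ≤ g'(y) ≤ C₀ for every g ∈ G and every y ∈ ℝ; (b) for every g ∈ G the function y ↦ log g'(y) is uniformly continuous on ℝ; (c) there is a compact set K ⊂ ℝ such that w(x) ∈ K for every point x of the hyperbolic set E⁺ = { x ∈ ℝ : λ_*(x) > 0 } and every word w in G. If E⁺ has positive Lebesgue measure, then G has a hyperbolic resilient point: there exist u ∈ ℝ and words H and R in G such that H(u) = u, H'(u) < 1, R(u) ≠ u, and H^ℓ(R(u)) → u as ℓ → ∞. -/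
/-!
Since `E⁺` has positive measure it is uncountable, so for some rational rate `c > 0` uncountably
many points `x ∈ E⁺` admit, for infinitely many `n`, a word of length `≤ n` expanding at `x` by
more than `e^{cn}`. Inverting such a word and cutting it at a Pliss time gives a word `W` and a
point `y` of the orbit of `x` with `W y = x`, such that every block of first letters of `W`
contracts at `y` exponentially in its length. Bounded distortion (uniform continuity of `log g'`)
then makes `W` contract the whole `δ`-ball around `y`, by a factor that tends to `0` with `n`.
The points `y` lie in `K`, so by pigeonhole two points `x₀ ≠ x₁` share a ball `B` of a finite net
of `K` and a word `N` with `N xᵢ ∈ B`, and both have returns `Wᵢ` from `B` with arbitrarily small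
factors. Each `Hᵢ = N ∘ Wᵢ` is then a contraction of `B`; its fixed point `uᵢ` has `Wᵢ uᵢ` close
to `xᵢ`, hence `u₀ ≠ u₁`, and `H₁` moves `u₀` to another point of `B`, the basin of `u₀` for `H₀`.
-/

open MeasureTheory Filter Topology

/-- Composition of a list of maps: the list `[g_k, …, g₁]` composes to `g_k ∘ ⋯ ∘ g₁`
(the empty list gives the identity map). -/
def wordComp (w : List (ℝ → ℝ)) : ℝ → ℝ := w.foldr (· ∘ ·) id

/-- A word in `G` is a finite list of elements of `G`. -/
def IsWord (G : Finset (ℝ → ℝ)) (w : List (ℝ → ℝ)) : Prop := ∀ g ∈ w, g ∈ G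

/-- The maximal `n`-expansion `μ_n(x)`: the maximum of `w'(x)` over words `w` in `G`
of length at most `n`. -/
noncomputable def maxExp (G : Finset (ℝ → ℝ)) (n : ℕ) (x : ℝ) : ℝ :=
  sSup {d : ℝ | ∃ w : List (ℝ → ℝ), IsWord G w ∧ w.length ≤ n ∧ d = deriv (wordComp w) x}

/-- The transverse expansion exponent `λ_*(x) = limsup_n log(μ_n(x))/n`, in `[0,∞]`. -/
noncomputable def expExponent (G : Finset (ℝ → ℝ)) (x : ℝ) : ENNReal :=
  Filter.limsup (fun n : ℕ => ENNReal.ofReal (Real.log (maxExp G n x) / n)) Filter.atTop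

open Set Metric Real
open scoped NNReal

section Words

theorem wordComp_cons (g : ℝ → ℝ) (w : List (ℝ → ℝ)) :
    wordComp (g :: w) = g ∘ wordComp w :=
  rfl

theorem wordComp_append (u v : List (ℝ → ℝ)) :
    wordComp (u ++ v) = wordComp u ∘ wordComp v := by
  induction u with
  | nil => rfl
  | cons g u ih => rw [List.cons_append, wordComp_cons, wordComp_cons, ih]; rfl

theorem wordComp_append_apply (u v : List (ℝ → ℝ)) (x : ℝ) :
    wordComp (u ++ v) x = wordComp u (wordComp v x) := by
  rw [wordComp_append, Function.comp_apply]

theorem IsWord.append {G : Finset (ℝ → ℝ)} {u v : List (ℝ → ℝ)} (hu : IsWord G u)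
    (hv : IsWord G v) : IsWord G (u ++ v) :=
  fun g hg => (List.mem_append.1 hg).elim (hu g) (hv g)

theorem countable_setOf_isWord (G : Finset (ℝ → ℝ)) : {w | IsWord G w}.Countable := by
  refine (countable_range (List.map ((↑) : G → ℝ → ℝ))).mono fun w hw => ?_
  lift w to List G using hw
  exact ⟨w, rfl⟩

theorem IsWord.exists_leftInverse {G : Finset (ℝ → ℝ)}
    (hinv : ∀ g ∈ G, ∃ h ∈ G, ∀ x, h (g x) = x) {w : List (ℝ → ℝ)} (hw : IsWord G w) :
    ∃ W, IsWord G W ∧ W.length = w.length ∧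
      Function.LeftInverse (wordComp W) (wordComp w) := by
  induction w with
  | nil => exact ⟨[], fun _ h => absurd h List.not_mem_nil, rfl, fun _ => rfl⟩
  | cons g w ih =>
    obtain ⟨W, hW, hlen, hleft⟩ := ih fun f hf => hw f (List.mem_cons_of_mem g hf)
    obtain ⟨h, hh, hhg⟩ := hinv g (hw g List.mem_cons_self)
    refine ⟨W ++ [h], hW.append (by simpa [IsWord] using hh), by simp [hlen], fun x => ?_⟩
    rw [wordComp_append]
    change wordComp W (h (g (wordComp w x))) = x
    rw [hhg, hleft x]

theorem contDiff_wordComp {w : List (ℝ → ℝ)} (hw : ∀ g ∈ w, ContDiff ℝ 1 g) :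
    ContDiff ℝ 1 (wordComp w) := by
  induction w with
  | nil => exact contDiff_id
  | cons g w ih =>
    exact (hw g List.mem_cons_self).comp (ih fun f hf => hw f (List.mem_cons_of_mem g hf))

theorem differentiable_of_deriv_pos {f : ℝ → ℝ} (hf : ∀ y, 0 < deriv f y) :
    Differentiable ℝ f :=
  fun y => differentiableAt_of_deriv_ne_zero (hf y).ne'

theorem differentiable_wordComp {w : List (ℝ → ℝ)} (hw : ∀ g ∈ w, Differentiable ℝ g) :
    Differentiable ℝ (wordComp w) := by
  induction w with
  | nil => exact differentiable_id
  | cons g w ih =>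
    exact (hw g List.mem_cons_self).comp (ih fun f hf => hw f (List.mem_cons_of_mem g hf))

theorem deriv_wordComp_append {u v : List (ℝ → ℝ)} (hu : ∀ g ∈ u, Differentiable ℝ g)
    (hv : ∀ g ∈ v, Differentiable ℝ g) (y : ℝ) :
    deriv (wordComp (u ++ v)) y = deriv (wordComp u) (wordComp v y) * deriv (wordComp v) y := by
  rw [wordComp_append]
  exact deriv_comp y (differentiable_wordComp hu _) (differentiable_wordComp hv _)

theorem deriv_wordComp_pos {w : List (ℝ → ℝ)} (hw : ∀ g ∈ w, ∀ y, 0 < deriv g y) (y : ℝ) :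
    0 < deriv (wordComp w) y := by
  induction w generalizing y with
  | nil => simp [wordComp]
  | cons g w ih =>
    have hg := hw g List.mem_cons_self
    have hw' : ∀ f ∈ w, ∀ y, 0 < deriv f y := fun f hf => hw f (List.mem_cons_of_mem g hf)
    rw [wordComp_cons, deriv_comp y (differentiable_of_deriv_pos hg _)
      (differentiable_wordComp (fun f hf => differentiable_of_deriv_pos (hw' f hf)) _)]
    exact mul_pos (hg _) (ih hw' y)

end Words

section Distortion

theorem exists_pos_forall_deriv_le_exp_mul {G : Finset (ℝ → ℝ)}
    (hpos : ∀ g ∈ G, ∀ y, 0 < deriv g y)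
    (hUC : ∀ g ∈ G, UniformContinuous fun y => log (deriv g y)) {a : ℝ} (ha : 0 < a) :
    ∃ δ > 0, ∀ g ∈ G, ∀ c ξ, dist ξ c ≤ δ → deriv g ξ ≤ exp a * deriv g c := by
  have h : ∀ᶠ p : ℝ × ℝ in uniformity ℝ, ∀ g ∈ G,
      dist (log (deriv g p.1)) (log (deriv g p.2)) < a :=
    (eventually_all_finset G).2 fun g hg => hUC g hg (dist_mem_uniformity ha)
  obtain ⟨δ, hδ, hδa⟩ := mem_uniformity_dist.1 h
  refine ⟨δ / 2, half_pos hδ, fun g hg c ξ hξ => ?_⟩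
  have hlog := hδa (hξ.trans_lt (half_lt_self hδ)) g hg
  rw [Real.dist_eq] at hlog
  rw [← exp_log (hpos g hg ξ), ← exp_log (hpos g hg c), ← exp_add, exp_le_exp]
  linarith [(abs_sub_lt_iff.1 hlog).1]

theorem exists_append_forall_suffix_deriv_le (a : ℝ) {W : List (ℝ → ℝ)}
    (hW : ∀ g ∈ W, ∀ y, 0 < deriv g y) (y : ℝ) :
    ∃ A B, W = A ++ B ∧
      (∀ t, t <:+ A → deriv (wordComp t) (wordComp B y) ≤ exp (-(a * t.length))) ∧
      deriv (wordComp A) (wordComp B y) ≤ exp (a * B.length) * deriv (wordComp W) y := by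
  classical
  -- Pliss: cut `W` at the suffix `B` (the letters applied first) maximising
  -- `log (wordComp B)'(y) + a |B|`.
  obtain ⟨B, hB, hmax⟩ := W.tails.toFinset.exists_max_image
    (fun B => log (deriv (wordComp B) y) + a * B.length) ⟨W, by simp⟩
  obtain ⟨A, rfl⟩ := (List.mem_tails _ _).1 (List.mem_toFinset.1 hB)
  have hApos : ∀ g ∈ A, ∀ y, 0 < deriv g y := fun g hg => hW g (List.mem_append_left B hg)
  have hBpos : ∀ g ∈ B, ∀ y, 0 < deriv g y := fun g hg => hW g (List.mem_append_right A hg)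
  have hBdiff : ∀ g ∈ B, Differentiable ℝ g :=
    fun g hg => differentiable_of_deriv_pos (hBpos g hg)
  have hB' := deriv_wordComp_pos hBpos y
  refine ⟨A, B, rfl, fun t ⟨s, hst⟩ => ?_, ?_⟩
  · have htpos : ∀ g ∈ t, ∀ y, 0 < deriv g y :=
      fun g hg => hApos g (hst ▸ List.mem_append_right s hg)
    have h := hmax (t ++ B) (List.mem_toFinset.2 ((List.mem_tails _ _).2
      ⟨s, by rw [← hst, List.append_assoc]⟩))
    rw [deriv_wordComp_append (fun g hg => differentiable_of_deriv_pos (htpos g hg)) hBdiff,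
      log_mul (deriv_wordComp_pos htpos _).ne' hB'.ne', List.length_append, Nat.cast_add] at h
    rw [← log_le_iff_le_exp (deriv_wordComp_pos htpos _)]
    linarith
  · have h := hmax [] (List.mem_toFinset.2 ((List.mem_tails _ _).2 List.nil_suffix))
    have hexpB : 1 ≤ exp (a * B.length) * deriv (wordComp B) y := by
      rw [show deriv (wordComp []) y = 1 from deriv_id y, log_one, List.length_nil,
        Nat.cast_zero, mul_zero, add_zero] at h
      rw [← exp_log hB', ← exp_add]
      exact one_le_exp (by linarith)
    have hA' := deriv_wordComp_pos hApos (wordComp B y)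
    rw [deriv_wordComp_append (fun g hg => differentiable_of_deriv_pos (hApos g hg)) hBdiff]
    nlinarith

theorem dist_wordComp_le_of_forall_suffix {a δ y : ℝ} {W : List (ℝ → ℝ)}
    (hpos : ∀ g ∈ W, ∀ y, 0 < deriv g y)
    (hmod : ∀ g ∈ W, ∀ c ξ, dist ξ c ≤ δ → deriv g ξ ≤ exp a * deriv g c)
    (hsuff : ∀ t, t <:+ W → deriv (wordComp t) y ≤ exp (-(a * t.length)))
    {z z' : ℝ} (hz : z ∈ closedBall y δ) (hz' : z' ∈ closedBall y δ) :
    dist (wordComp W z) (wordComp W z') ≤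
      exp (a * W.length) * deriv (wordComp W) y * dist z z' := by
  induction W generalizing z z' with
  | nil => simp [wordComp]
  | cons g V ih =>
    have hg := hpos g List.mem_cons_self
    have hVpos : ∀ f ∈ V, ∀ y, 0 < deriv f y := fun f hf => hpos f (List.mem_cons_of_mem g hf)
    have ih' : ∀ {p p'}, p ∈ closedBall y δ → p' ∈ closedBall y δ →
        dist (wordComp V p) (wordComp V p') ≤
          exp (a * V.length) * deriv (wordComp V) y * dist p p' :=
      ih hVpos (fun f hf => hmod f (List.mem_cons_of_mem g hf))
        (fun t ht => hsuff t (ht.trans (List.suffix_cons g V)))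
    have hV : exp (a * V.length) * deriv (wordComp V) y ≤ 1 := by
      have := hsuff V (List.suffix_cons g V)
      calc exp (a * V.length) * deriv (wordComp V) y
          ≤ exp (a * V.length) * exp (-(a * V.length)) := by gcongr
        _ = 1 := by rw [← exp_add, add_neg_cancel, exp_zero]
    have hy : y ∈ closedBall y δ := mem_closedBall_self (dist_nonneg.trans hz)
    have hmaps : ∀ p ∈ closedBall y δ, wordComp V p ∈ closedBall (wordComp V y) δ :=
      fun p hp => (ih' hp hy).trans ((mul_le_of_le_one_left dist_nonneg hV).trans hp)
    have hglip : dist (g (wordComp V z)) (g (wordComp V z'))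
        ≤ exp a * deriv g (wordComp V y) * dist (wordComp V z) (wordComp V z') := by
      simp only [dist_eq_norm]
      refine (convex_closedBall _ _).norm_image_sub_le_of_norm_deriv_le
        (fun ξ _ => differentiable_of_deriv_pos hg ξ) (fun ξ hξ => ?_) (hmaps z' hz')
        (hmaps z hz)
      rw [norm_of_nonneg (hg ξ).le]
      exact hmod g List.mem_cons_self _ ξ hξ
    calc dist (wordComp (g :: V) z) (wordComp (g :: V) z')
        = dist (g (wordComp V z)) (g (wordComp V z')) := rfl
      _ ≤ exp a * deriv g (wordComp V y) *
          (exp (a * V.length) * deriv (wordComp V) y * dist z z') := by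
        refine hglip.trans (mul_le_mul_of_nonneg_left (ih' hz hz') ?_)
        exact mul_nonneg (exp_pos a).le (hg _).le
      _ = exp (a * (g :: V).length) * deriv (wordComp (g :: V)) y * dist z z' := by
        rw [wordComp_cons, deriv_comp y (differentiable_of_deriv_pos hg _)
          (differentiable_wordComp (fun f hf => differentiable_of_deriv_pos (hVpos f hf)) _),
          List.length_cons, Nat.cast_succ, mul_add_one, exp_add]
        ring

end Distortion

section ExpansionRates

def FrequentlyExpands (G : Finset (ℝ → ℝ)) (c x : ℝ) : Prop :=
  ∃ᶠ n : ℕ in atTop, ∃ w, IsWord G w ∧ w.length ≤ n ∧ exp (c * n) < deriv (wordComp w) x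

theorem exists_rat_frequentlyExpands {G : Finset (ℝ → ℝ)} (hpos : ∀ g ∈ G, ∀ y, 0 < deriv g y)
    {x : ℝ} (hx : 0 < expExponent G x) : ∃ q : ℚ, 0 < q ∧ FrequentlyExpands G q x := by
  obtain ⟨q, -, hq0, hqx⟩ := ENNReal.lt_iff_exists_rat_btwn.1 hx
  have hq : (0 : ℝ) < q := by simpa using hq0
  refine ⟨q, by exact_mod_cast hq,
    (frequently_lt_of_lt_limsup (by isBoundedDefault) hqx).mono fun n hn => ?_⟩
  have hlt : (q : ℝ) < log (maxExp G n x) / n := (ENNReal.ofReal_lt_ofReal_iff'.1 hn).1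
  have hn0 : (0 : ℝ) < n := Nat.cast_pos.2 <| Nat.pos_of_ne_zero fun h => by
    rw [h, Nat.cast_zero, div_zero] at hlt
    linarith
  have hlog : q * n < log (maxExp G n x) := (lt_div_iff₀ hn0).1 hlt
  -- `0 ≤ maxExp` holds even where `sSup` would take its junk value `0`
  have hμ : 1 < maxExp G n x := by
    refine (log_pos_iff (Real.sSup_nonneg ?_)).1 ((mul_pos hq hn0).trans hlog)
    rintro d ⟨w, hw, -, rfl⟩
    exact (deriv_wordComp_pos (fun g hg => hpos g (hw g hg)) x).le
  have hexp := (lt_log_iff_exp_lt (zero_lt_one.trans hμ)).1 hlog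
  unfold maxExp at hexp
  obtain ⟨d, ⟨w, hw, hlen, rfl⟩, hd⟩ := exists_lt_of_lt_csSup
    (by exact ⟨1, [], fun _ h => absurd h List.not_mem_nil, Nat.zero_le _, (deriv_id x).symm⟩) hexp
  exact ⟨w, hw, hlen, hd⟩

theorem exists_rat_not_countable {G : Finset (ℝ → ℝ)} (hpos : ∀ g ∈ G, ∀ y, 0 < deriv g y)
    (hE : 0 < volume {x : ℝ | 0 < expExponent G x}) :
    ∃ q : ℚ, 0 < q ∧ ¬{x | 0 < expExponent G x ∧ FrequentlyExpands G q x}.Countable := by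
  by_contra! h
  refine hE.ne' (Set.Countable.measure_zero ?_ _)
  refine (countable_iUnion fun q : ℚ => countable_iUnion fun hq : 0 < q => h q hq).mono
    fun x hx => ?_
  obtain ⟨q, hq, hqx⟩ := exists_rat_frequentlyExpands hpos hx
  exact mem_iUnion₂.2 ⟨q, hq, hx, hqx⟩

end ExpansionRates

section Returns

/-- The return starts from the orbit point `wordComp v x`, which lies in `K` when `x ∈ E⁺`. -/
def IsContractingReturn (G : Finset (ℝ → ℝ)) (δ : ℝ) (κ : ℝ≥0) (x : ℝ)
    (v W : List (ℝ → ℝ)) : Prop :=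
  IsWord G v ∧ IsWord G W ∧ wordComp W (wordComp v x) = x ∧
    LipschitzOnWith κ (wordComp W) (closedBall (wordComp v x) δ)

theorem IsContractingReturn.mono {G : Finset (ℝ → ℝ)} {δ : ℝ} {κ κ' : ℝ≥0} {x : ℝ}
    {v W : List (ℝ → ℝ)} (h : IsContractingReturn G δ κ x v W) (hκ : κ ≤ κ') :
    IsContractingReturn G δ κ' x v W :=
  ⟨h.1, h.2.1, h.2.2.1, h.2.2.2.weaken hκ⟩

theorem exists_isContractingReturn {G : Finset (ℝ → ℝ)} {a δ : ℝ}
    (hpos : ∀ g ∈ G, ∀ y, 0 < deriv g y) (hinv : ∀ g ∈ G, ∃ h ∈ G, ∀ x, h (g x) = x)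
    (hmod : ∀ g ∈ G, ∀ c ξ, dist ξ c ≤ δ → deriv g ξ ≤ exp a * deriv g c)
    {w : List (ℝ → ℝ)} (hw : IsWord G w) {x : ℝ} {κ : ℝ≥0}
    (hκ : exp (a * w.length) ≤ κ * deriv (wordComp w) x) :
    ∃ v W, IsContractingReturn G δ κ x v W := by
  obtain ⟨W₀, hW₀, hlen, hleft⟩ := hw.exists_leftInverse hinv
  have hdiff : ∀ {u}, IsWord G u → Differentiable ℝ (wordComp u) :=
    fun hu => differentiable_wordComp fun g hg => differentiable_of_deriv_pos (hpos g (hu g hg))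
  have hW₀w : deriv (wordComp W₀) (wordComp w x) * deriv (wordComp w) x = 1 := by
    rw [← deriv_comp x (hdiff hW₀ _) (hdiff hw _), hleft.comp_eq_id, deriv_id]
  obtain ⟨A, B, rfl, hsuff, hA⟩ := exists_append_forall_suffix_deriv_le a
    (fun g hg => hpos g (hW₀ g hg)) (wordComp w x)
  have hAG : IsWord G A := fun g hg => hW₀ g (List.mem_append_left B hg)
  have hBG : IsWord G B := fun g hg => hW₀ g (List.mem_append_right A hg)
  have hret : wordComp A (wordComp (B ++ w) x) = x := by
    simpa only [wordComp_append, Function.comp_apply] using hleft x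
  refine ⟨B ++ w, A, hBG.append hw, hAG, hret,
    LipschitzOnWith.of_dist_le_mul fun z hz z' hz' => ?_⟩
  rw [wordComp_append_apply] at hz hz'
  refine (dist_wordComp_le_of_forall_suffix (fun g hg => hpos g (hAG g hg))
    (fun g hg => hmod g (hAG g hg)) hsuff hz hz').trans
    (mul_le_mul_of_nonneg_right ?_ dist_nonneg)
  have hW₀' := deriv_wordComp_pos (fun g hg => hpos g (hW₀ g hg)) (wordComp w x)
  calc exp (a * A.length) * deriv (wordComp A) (wordComp B (wordComp w x))
      ≤ exp (a * A.length) *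
          (exp (a * B.length) * deriv (wordComp (A ++ B)) (wordComp w x)) := by
        gcongr
    _ = exp (a * w.length) * deriv (wordComp (A ++ B)) (wordComp w x) := by
        rw [← hlen, List.length_append, Nat.cast_add, mul_add, exp_add]
        ring
    _ ≤ κ * deriv (wordComp w) x * deriv (wordComp (A ++ B)) (wordComp w x) := by gcongr
    _ = κ := by rw [mul_assoc, mul_comm (deriv _ x), hW₀w, mul_one]

theorem FrequentlyExpands.exists_isContractingReturn {G : Finset (ℝ → ℝ)} {a c δ x : ℝ}
    (hx : FrequentlyExpands G c x)
    (hpos : ∀ g ∈ G, ∀ y, 0 < deriv g y) (hinv : ∀ g ∈ G, ∃ h ∈ G, ∀ x, h (g x) = x)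
    (hmod : ∀ g ∈ G, ∀ c ξ, dist ξ c ≤ δ → deriv g ξ ≤ exp a * deriv g c)
    (ha : 0 ≤ a) (hac : a < c) {κ : ℝ≥0} (hκ : 0 < κ) :
    ∃ v W, IsContractingReturn G δ κ x v W := by
  have hlim : Tendsto (fun n : ℕ => exp ((a - c) * n)) atTop (𝓝 0) :=
    tendsto_exp_atBot.comp (tendsto_natCast_atTop_atTop.const_mul_atTop_of_neg (sub_neg.2 hac))
  obtain ⟨n, ⟨w, hw, hlen, hexp⟩, hn⟩ :=
    (hx.and_eventually (hlim.eventually_lt_const (NNReal.coe_pos.2 hκ))).exists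
  refine _root_.exists_isContractingReturn hpos hinv hmod hw ?_
  calc exp (a * w.length) ≤ exp (a * n) := by gcongr
    _ = exp ((a - c) * n) * exp (c * n) := by rw [← exp_add]; ring_nf
    _ ≤ κ * deriv (wordComp w) x := mul_le_mul hn.le hexp.le (exp_pos _).le κ.coe_nonneg

theorem Set.Finite.exists_mem_forall_pos_of_monotone {ι : Type*} {t : Set ι} (ht : t.Finite)
    {P : ι → ℝ≥0 → Prop} (hP : ∀ i, Monotone (P i)) (h : ∀ κ, 0 < κ → ∃ i ∈ t, P i κ) :
    ∃ i ∈ t, ∀ κ, 0 < κ → P i κ := by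
  by_contra! hne
  have hev : ∀ᶠ κ in 𝓝[>] 0, ∀ i ∈ t, ¬P i κ := (eventually_all_finite ht).2 fun i hi => by
    obtain ⟨κ₀, hκ₀, hn⟩ := hne i hi
    filter_upwards [Ioo_mem_nhdsGT hκ₀] with κ hκ using fun hPκ => hn (hP i hκ.2.le hPκ)
  obtain ⟨κ, hκ, hκpos⟩ := (hev.and self_mem_nhdsWithin).exists
  obtain ⟨i, hi, hPi⟩ := h κ hκpos
  exact hκ i hi hPi

theorem exists_mem_forall_isContractingReturn_mem_ball {G : Finset (ℝ → ℝ)} {δ r x : ℝ}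
    {K t : Set ℝ} (ht : t.Finite) (hKt : K ⊆ ⋃ c ∈ t, ball c r)
    (hxK : ∀ v, IsWord G v → wordComp v x ∈ K)
    (hret : ∀ κ : ℝ≥0, 0 < κ → ∃ v W, IsContractingReturn G δ κ x v W) :
    ∃ c ∈ t, ∀ κ : ℝ≥0, 0 < κ →
      ∃ v W, IsContractingReturn G δ κ x v W ∧ wordComp v x ∈ ball c r := by
  refine ht.exists_mem_forall_pos_of_monotone
    (fun c κ κ' hκ ⟨v, W, h, hv⟩ => ⟨v, W, h.mono hκ, hv⟩) fun κ hκ => ?_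
  obtain ⟨v, W, h⟩ := hret κ hκ
  obtain ⟨c, hc, hvc⟩ := mem_iUnion₂.1 (hKt (hxK v h.1))
  exact ⟨c, hc, v, W, h, hvc⟩

end Returns

section FixedPoints

structure AttractsOn {α : Type*} [TopologicalSpace α] (F : α → α) (s : Set α) (u : α) : Prop where
  mem : u ∈ s
  isFixedPt : Function.IsFixedPt F u
  mapsTo : MapsTo F s s
  tendsto : ∀ p ∈ s, Tendsto (fun n => F^[n] p) atTop (𝓝 u)

theorem exists_attractsOn_of_lipschitzOnWith {α : Type*} [MetricSpace α] [CompleteSpace α]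
    {F : α → α} {s : Set α} {K : ℝ≥0} (hs : IsClosed s) (hne : s.Nonempty) (hmaps : MapsTo F s s)
    (hK : K < 1) (hF : LipschitzOnWith K F s) : ∃ u, AttractsOn F s u := by
  have := hs.isComplete.completeSpace_coe
  have := hne.to_subtype
  have hc : ContractingWith K (hmaps.restrict F s s) := ⟨hK, hF.mapsToRestrict hmaps⟩
  refine ⟨(ContractingWith.fixedPoint (hmaps.restrict F s s) hc : s), ⟨Subtype.coe_prop _,
    congrArg Subtype.val hc.fixedPoint_isFixedPt, hmaps, fun p hp => ?_⟩⟩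
  have := (continuous_subtype_val.tendsto _).comp (hc.tendsto_iterate_fixedPoint ⟨p, hp⟩)
  simpa [Function.comp_def, hmaps.iterate_restrict] using this

theorem AttractsOn.apply_ne_and_tendsto {α : Type*} [TopologicalSpace α] [T2Space α]
    {H R : α → α} {s : Set α} {u u' : α} (hH : AttractsOn H s u) (hR : AttractsOn R s u')
    (hne : u ≠ u') : R u ≠ u ∧ Tendsto (fun n => H^[n] (R u)) atTop (𝓝 u) := by
  refine ⟨fun hRu => hne (tendsto_nhds_unique ?_ (hR.tendsto u hH.mem)),
    hH.tendsto _ (hR.mapsTo hH.mem)⟩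
  simp [Function.iterate_fixed hRu]

theorem ne_of_apply_apply_eq {α : Type*} [MetricSpace α] {N W₀ W₁ : α → α}
    (hN : Function.Injective N) {u₀ u₁ x₀ x₁ : α} {ε : ℝ} (h₀ : N (W₀ u₀) = u₀)
    (h₁ : N (W₁ u₁) = u₁) (hd₀ : dist (W₀ u₀) x₀ ≤ ε) (hd₁ : dist (W₁ u₁) x₁ ≤ ε)
    (hε : 2 * ε < dist x₀ x₁) : u₀ ≠ u₁ := by
  rintro rfl
  have hW : W₀ u₀ = W₁ u₀ := hN (h₀.trans h₁.symm)
  rw [hW] at hd₀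
  linarith [dist_triangle_left x₀ x₁ (W₁ u₀)]

theorem LipschitzOnWith.comp_closedBall {α β γ : Type*} [PseudoMetricSpace α]
    [PseudoMetricSpace β] [PseudoMetricSpace γ] {N : β → γ} {W : α → β} {c y : α} {x : β}
    {δ : ℝ} {L κ : ℝ≥0} (hN : LipschitzOnWith L N (closedBall x δ))
    (hW : LipschitzOnWith κ W (closedBall y δ)) (hWy : W y = x) (hyc : dist y c ≤ δ / 2)
    (hκ : κ ≤ 1) : LipschitzOnWith (L * κ) (N ∘ W) (closedBall c (δ / 2)) := by
  have hsub : closedBall c (δ / 2) ⊆ closedBall y δ :=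
    closedBall_subset_closedBall' (by rw [dist_comm]; linarith)
  have hy : y ∈ closedBall y δ :=
    mem_closedBall_self (by linarith [dist_nonneg (x := y) (y := c)])
  refine hN.comp (hW.mono hsub) fun p hp => ?_
  rw [mem_closedBall, ← hWy]
  calc dist (W p) (W y) ≤ κ * dist p y := hW.dist_le_mul p (hsub hp) y hy
    _ ≤ 1 * δ := mul_le_mul (by exact_mod_cast hκ) (hsub hp) dist_nonneg zero_le_one
    _ = δ := one_mul δ

theorem exists_attractsOn_comp {N W : ℝ → ℝ} {c x y δ : ℝ} {L κ : ℝ≥0} (hδ : 0 < δ)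
    (hN : LipschitzOnWith L N (closedBall x δ)) (hNx : dist (N x) c ≤ δ / 16)
    (hW : LipschitzOnWith κ W (closedBall y δ)) (hWy : W y = x) (hyc : dist y c ≤ δ / 16)
    (hκ : κ ≤ 1) (hLκ : L * κ ≤ 1 / 2) :
    ∃ u, AttractsOn (N ∘ W) (closedBall c (δ / 4)) u ∧ deriv (N ∘ W) u < 1 ∧
      dist (W u) x ≤ κ * δ := by
  have hLκ' : ((L * κ : ℝ≥0) : ℝ) ≤ 1 / 2 := by exact_mod_cast hLκ
  have hlip := hN.comp_closedBall (c := c) hW hWy (by linarith) hκ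
  have hy : y ∈ closedBall c (δ / 2) := by rw [mem_closedBall]; linarith
  have hball : closedBall c (δ / 4) ⊆ closedBall c (δ / 2) :=
    closedBall_subset_closedBall (by linarith)
  have hmaps : MapsTo (N ∘ W) (closedBall c (δ / 4)) (closedBall c (δ / 4)) := fun p hp => by
    have hpy : dist p y ≤ δ / 4 + δ / 16 := by
      linarith [dist_triangle_right p y c, mem_closedBall.1 hp]
    have h := hlip.dist_le_mul p (hball hp) y hy
    rw [Function.comp_apply, Function.comp_apply, hWy] at h
    rw [mem_closedBall]
    calc dist (N (W p)) c ≤ dist (N (W p)) (N x) + dist (N x) c := dist_triangle _ _ _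
      _ ≤ 1 / 2 * (δ / 4 + δ / 16) + δ / 16 :=
        add_le_add (h.trans (mul_le_mul hLκ' hpy dist_nonneg (by norm_num))) hNx
      _ ≤ δ / 4 := by linarith
  obtain ⟨u, hu⟩ := exists_attractsOn_of_lipschitzOnWith isClosed_closedBall
    (nonempty_closedBall.2 (by positivity)) hmaps (hLκ.trans_lt (by norm_num)) (hlip.mono hball)
  have huc : dist u c < δ / 2 := (mem_closedBall.1 hu.mem).trans_lt (by linarith)
  refine ⟨u, hu, ?_, ?_⟩
  · have hnhds : closedBall c (δ / 2) ∈ 𝓝 u :=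
      mem_of_superset (isOpen_ball.mem_nhds (mem_ball.2 huc)) ball_subset_closedBall
    have := norm_deriv_le_of_lipschitzOn hnhds hlip
    rw [Real.norm_eq_abs] at this
    linarith [le_abs_self (deriv (N ∘ W) u)]
  · rw [← hWy]
    have huy : dist u y ≤ δ := by linarith [dist_triangle_right u y c]
    exact (hW.dist_le_mul u huy y (mem_closedBall_self hδ.le)).trans (by gcongr)

end FixedPoints

theorem Set.exists_ne_map_eq_of_not_countable {α β : Type*} {s : Set α} {t : Set β} {f : α → β}
    (hs : ¬s.Countable) (hf : MapsTo f s t) (ht : t.Countable) :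
    ∃ x ∈ s, ∃ y ∈ s, x ≠ y ∧ f x = f y := by
  by_contra! h
  exact hs (hf.countable_of_injOn (fun x hx y hy => not_imp_not.1 (h x hx y hy)) ht)

theorem exists_attractsOn_wordComp_append {G : Finset (ℝ → ℝ)}
    (hC1 : ∀ g ∈ G, ContDiff ℝ 1 g) {δ c x ε : ℝ} (hδ : 0 < δ) (hε : 0 < ε)
    {N : List (ℝ → ℝ)} (hN : IsWord G N) (hNx : dist (wordComp N x) c ≤ δ / 16)
    (hret : ∀ κ : ℝ≥0, 0 < κ →
      ∃ v W, IsContractingReturn G δ κ x v W ∧ wordComp v x ∈ ball c (δ / 16)) :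
    ∃ W u, IsWord G W ∧ AttractsOn (wordComp (N ++ W)) (closedBall c (δ / 4)) u ∧
      deriv (wordComp (N ++ W)) u < 1 ∧ dist (wordComp W u) x ≤ ε := by
  obtain ⟨L, hL⟩ := (contDiff_wordComp fun g hg => hC1 g (hN g hg)).contDiffOn
    |>.exists_lipschitzOnWith one_ne_zero (convex_closedBall x δ) (isCompact_closedBall x δ)
  have hsmall : ∀ᶠ κ : ℝ≥0 in 𝓝 0, κ < 1 ∧ L * κ < 1 / 2 ∧ (κ : ℝ) * δ < ε :=
    (tendsto_id.eventually_lt_const one_pos).and <|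
      (((continuous_const.mul continuous_id).tendsto' 0 0 (mul_zero L)).eventually_lt_const
        (by norm_num)).and <|
      ((NNReal.continuous_coe.mul continuous_const).tendsto' 0 0 (by simp)).eventually_lt_const hε
  obtain ⟨κ, ⟨hκ, hLκ, hκδ⟩, hκ0⟩ :=
    ((hsmall.filter_mono nhdsWithin_le_nhds).and (self_mem_nhdsWithin (s := Ioi 0))).exists
  obtain ⟨v, W, ⟨-, hW, hWv, hlip⟩, hvc⟩ := hret κ hκ0
  obtain ⟨u, hu, hder, hdist⟩ :=
    exists_attractsOn_comp hδ hL hNx hlip hWv (mem_ball.1 hvc).le hκ.le hLκ.le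
  rw [← wordComp_append] at hu hder
  exact ⟨W, u, hW, hu, hder, hdist.trans hκδ.le⟩

def HasHyperbolicResilientPoint (G : Finset (ℝ → ℝ)) : Prop :=
  ∃ (u : ℝ) (H R : List (ℝ → ℝ)), IsWord G H ∧ IsWord G R ∧
    wordComp H u = u ∧ deriv (wordComp H) u < 1 ∧ wordComp R u ≠ u ∧
    Tendsto (fun ℓ : ℕ => (wordComp H)^[ℓ] (wordComp R u)) atTop (𝓝 u)

theorem hasHyperbolicResilientPoint_of_ne {G : Finset (ℝ → ℝ)}
    (hC1 : ∀ g ∈ G, ContDiff ℝ 1 g) (hpos : ∀ g ∈ G, ∀ y, 0 < deriv g y) {δ c x₀ x₁ : ℝ}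
    (hδ : 0 < δ) (hne : x₀ ≠ x₁) {N : List (ℝ → ℝ)} (hN : IsWord G N)
    (hNx : ∀ x ∈ ({x₀, x₁} : Set ℝ), dist (wordComp N x) c ≤ δ / 16 ∧ ∀ κ : ℝ≥0, 0 < κ →
      ∃ v W, IsContractingReturn G δ κ x v W ∧ wordComp v x ∈ ball c (δ / 16)) :
    HasHyperbolicResilientPoint G := by
  have hε : 0 < dist x₀ x₁ / 3 := by have := dist_pos.2 hne; positivity
  obtain ⟨W₀, u₀, hW₀, hA₀, hder₀, hd₀⟩ := exists_attractsOn_wordComp_append hC1 hδ hε hN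
    (hNx x₀ (by simp)).1 (hNx x₀ (by simp)).2
  obtain ⟨W₁, u₁, hW₁, hA₁, -, hd₁⟩ := exists_attractsOn_wordComp_append hC1 hδ hε hN
    (hNx x₁ (by simp)).1 (hNx x₁ (by simp)).2
  have hNinj : Function.Injective (wordComp N) := (strictMono_of_deriv_pos
    (deriv_wordComp_pos fun g hg => hpos g (hN g hg))).injective
  have hu : u₀ ≠ u₁ := ne_of_apply_apply_eq hNinj
    ((wordComp_append_apply N W₀ u₀).symm.trans hA₀.isFixedPt)
    ((wordComp_append_apply N W₁ u₁).symm.trans hA₁.isFixedPt) hd₀ hd₁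
    (by linarith [dist_pos.2 hne])
  obtain ⟨hRu, hlim⟩ := hA₀.apply_ne_and_tendsto hA₁ hu
  exact ⟨u₀, N ++ W₀, N ++ W₁, hN.append hW₀, hN.append hW₁, hA₀.isFixedPt, hder₀, hRu, hlim⟩

theorem positive_measure_hyperbolic_set_implies_hyperbolic_resilient_point_general
    (G : Finset (ℝ → ℝ))
    (hC1 : ∀ g ∈ G, ContDiff ℝ 1 g)
    (hpos : ∀ g ∈ G, ∀ y : ℝ, 0 < deriv g y)
    (hinv : ∀ g ∈ G, ∃ h ∈ G, (∀ x : ℝ, h (g x) = x) ∧ (∀ x : ℝ, g (h x) = x))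
    (hUC : ∀ g ∈ G, UniformContinuous fun y : ℝ => Real.log (deriv g y))
    (K : Set ℝ) (hK : IsCompact K)
    (hKorbit : ∀ x : ℝ, 0 < expExponent G x →
      ∀ w : List (ℝ → ℝ), IsWord G w → wordComp w x ∈ K)
    (hmeasure : 0 < volume {x : ℝ | 0 < expExponent G x}) :
    ∃ (u : ℝ) (H R : List (ℝ → ℝ)), IsWord G H ∧ IsWord G R ∧
      wordComp H u = u ∧ deriv (wordComp H) u < 1 ∧ wordComp R u ≠ u ∧
      Tendsto (fun ℓ : ℕ => (wordComp H)^[ℓ] (wordComp R u)) atTop (𝓝 u) := by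
  obtain ⟨q, hq, hunc⟩ := exists_rat_not_countable hpos hmeasure
  have hq' : (0 : ℝ) < q := by exact_mod_cast hq
  obtain ⟨δ, hδ, hmod⟩ := exists_pos_forall_deriv_le_exp_mul hpos hUC (half_pos hq')
  obtain ⟨t, -, ht, hKt⟩ :=
    finite_approx_of_totallyBounded hK.totallyBounded (δ / 16) (by positivity)
  have hcell : ∀ x ∈ {x | 0 < expExponent G x ∧ FrequentlyExpands G q x}, ∃ c ∈ t,
      ∀ κ : ℝ≥0, 0 < κ →
        ∃ v W, IsContractingReturn G δ κ x v W ∧ wordComp v x ∈ ball c (δ / 16) :=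
    fun x hx => exists_mem_forall_isContractingReturn_mem_ball ht hKt (hKorbit x hx.1)
      fun κ hκ => hx.2.exists_isContractingReturn hpos
        (fun g hg => (hinv g hg).imp fun _ h => ⟨h.1, h.2.1⟩) hmod (half_pos hq').le
        (half_lt_self hq') hκ
  choose! c hct hc using hcell
  choose! N W hN using fun x hx => hc x hx 1 one_pos
  obtain ⟨x₀, hx₀, x₁, hx₁, hne, hlabel⟩ := exists_ne_map_eq_of_not_countable hunc
    (fun x hx => mk_mem_prod (hct x hx) (hN x hx).1.1)
    (ht.countable.prod (countable_setOf_isWord G))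
  simp only [Prod.mk.injEq] at hlabel
  refine hasHyperbolicResilientPoint_of_ne (c := c x₀) hC1 hpos hδ hne (hN x₀ hx₀).1.1
    fun x hx => ?_
  rcases hx with rfl | rfl
  · exact ⟨(mem_ball.1 (hN x hx₀).2).le, hc x hx₀⟩
  · rw [hlabel.1, hlabel.2]
    exact ⟨(mem_ball.1 (hN x hx₁).2).le, hc x hx₁⟩

/-- If the hyperbolic set `E⁺ = {x | λ_*(x) > 0}` has positive Lebesgue measure, then
`G` has a hyperbolic resilient point. -/
theorem positive_measure_hyperbolic_set_implies_hyperbolic_resilient_point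
    (G : Finset (ℝ → ℝ))
    (hC1 : ∀ g ∈ G, ContDiff ℝ 1 g)
    (hpos : ∀ g ∈ G, ∀ y : ℝ, 0 < deriv g y)
    (hinv : ∀ g ∈ G, ∃ h ∈ G, (∀ x : ℝ, h (g x) = x) ∧ (∀ x : ℝ, g (h x) = x))
    (C₀ : ℝ) (hC₀ : 1 ≤ C₀)
    (hbound : ∀ g ∈ G, ∀ y : ℝ, 1 / C₀ ≤ deriv g y ∧ deriv g y ≤ C₀)
    (hUC : ∀ g ∈ G, UniformContinuous fun y : ℝ => Real.log (deriv g y))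
    (K : Set ℝ) (hK : IsCompact K)
    (hKorbit : ∀ x : ℝ, 0 < expExponent G x →
      ∀ w : List (ℝ → ℝ), IsWord G w → wordComp w x ∈ K)
    (hmeasure : 0 < volume {x : ℝ | 0 < expExponent G x}) :
    ∃ (u : ℝ) (H R : List (ℝ → ℝ)), IsWord G H ∧ IsWord G R ∧
      wordComp H u = u ∧ deriv (wordComp H) u < 1 ∧ wordComp R u ≠ u ∧
      Tendsto (fun ℓ : ℕ => (wordComp H)^[ℓ] (wordComp R u)) atTop (𝓝 u) :=
  positive_measure_hyperbolic_set_implies_hyperbolic_resilient_point_general G hC1 hpos hinv hUC K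
    hK hKorbit hmeasure
end

section
/- Let G be a finite set of C¹ diffeomorphisms of ℝ, closed under taking inverses, with every g ∈ G having everywhere positive derivative. Assume: (a) there is a constant C₀ ≥ 1 with 1/C₀ ≤ g'(y) ≤ C₀ for every g ∈ G and every y ∈ ℝ; (b) for every g ∈ G the function y ↦ log g'(y) is uniformly continuous on ℝ; (c) for every x ∈ ℝ the orbit { w(x) : w a word in G } is a bounded subset of ℝ. If there is no word Φ in G having a fixed point u ∈ ℝ with Φ'(u) < 1, then λ_*(x) = 0 for every x ∈ ℝ; that is, the hyperbolic set E⁺ = { x ∈ ℝ : λ_*(x) > 0 } is empty. -/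
open MeasureTheory Filter Topology

/-! If `λ_*(x) > λ > 0`, there are arbitrarily long words expanding at `x` at rate `λ`. Pliss'
lemma turns such a word into a positive proportion of hyperbolic times `j`, at which every final
segment of the word up to time `j` expands at rate `λ / 2`: the inverse branch along the orbit
from time `j` back to any earlier time contracts at rate `λ / 2`, and by uniform continuity of
`log g'` still at rate `λ / 4` on a neighbourhood of fixed size `δ`. Since orbits are bounded, two
hyperbolic times `i < j` that are far apart have `δ / 2`-close orbit points, and the inverse branch
from `j` back to `i` maps the `δ`-ball around the orbit point at time `j` into itself with
derivative `< 1`: a word with an attracting fixed point. -/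

open Finset Metric Real

def seqWord (g : ℕ → ℝ → ℝ) : ℕ → List (ℝ → ℝ)
  | 0 => []
  | k + 1 => g k :: seqWord g k

def seqOrbit (g : ℕ → ℝ → ℝ) (x : ℝ) : ℕ → ℝ
  | 0 => x
  | k + 1 => g k (seqOrbit g x k)

section Words

variable {g : ℕ → ℝ → ℝ} {k : ℕ}

lemma wordComp_seqWord (g : ℕ → ℝ → ℝ) (x : ℝ) (k : ℕ) :
    wordComp (seqWord g k) x = seqOrbit g x k := by
  induction k with
  | zero => rfl
  | succ k ih => exact congrArg (g k) ih

lemma isWord_seqWord {G : Finset (ℝ → ℝ)} (hg : ∀ i < k, g i ∈ G) : IsWord G (seqWord g k) := by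
  induction k with
  | zero => simp [IsWord, seqWord]
  | succ k ih =>
    simp only [IsWord, seqWord, List.forall_mem_cons]
    exact ⟨hg k k.lt_succ_self, ih fun i hi => hg i (hi.trans k.lt_succ_self)⟩

lemma seqWord_congr {g' : ℕ → ℝ → ℝ} (h : ∀ i < k, g i = g' i) : seqWord g k = seqWord g' k := by
  induction k with
  | zero => rfl
  | succ k ih =>
    rw [seqWord, seqWord, h k k.lt_succ_self, ih fun i hi => h i (hi.trans k.lt_succ_self)]

lemma exists_seqWord_eq (w : List (ℝ → ℝ)) :
    ∃ g : ℕ → ℝ → ℝ, seqWord g w.length = w ∧ ∀ i < w.length, g i ∈ w := by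
  induction w with
  | nil => exact ⟨fun _ => id, rfl, by simp⟩
  | cons a t ih =>
    obtain ⟨g, hg, hmem⟩ := ih
    refine ⟨Function.update g t.length a, ?_, fun i hi => ?_⟩
    · rw [List.length_cons, seqWord, Function.update_self,
        seqWord_congr fun i hi => Function.update_of_ne hi.ne _ _, hg]
    · rcases (Nat.lt_succ_iff.mp hi).eq_or_lt with rfl | hi
      · simp
      · simp [Function.update_of_ne hi.ne, hmem i hi]

lemma hasDerivAt_wordComp_seqWord (hg : ∀ i < k, Differentiable ℝ (g i)) (x : ℝ) :
    HasDerivAt (wordComp (seqWord g k)) (∏ i ∈ range k, deriv (g i) (seqOrbit g x i)) x := by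
  induction k with
  | zero => simpa [seqWord, wordComp] using hasDerivAt_id x
  | succ k ih =>
    have hk : HasDerivAt (g k) (deriv (g k) (seqOrbit g x k)) (wordComp (seqWord g k) x) := by
      rw [wordComp_seqWord]
      exact (hg k k.lt_succ_self _).hasDerivAt
    rw [prod_range_succ, mul_comm]
    exact hk.comp x (ih fun i hi => hg i (hi.trans k.lt_succ_self))

end Words

lemma deriv_comp_mul_deriv_eq_one {g h : ℝ → ℝ} {x : ℝ} (hg : DifferentiableAt ℝ g x)
    (hh : DifferentiableAt ℝ h (g x)) (hhg : ∀ y, h (g y) = y) :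
    deriv h (g x) * deriv g x = 1 := by
  have hid : h ∘ g = id := funext hhg
  have := hh.hasDerivAt.comp x hg.hasDerivAt
  rw [hid] at this
  exact this.unique (hasDerivAt_id x)

lemma sum_range_eq_sum_range_sub_add {M : Type*} [AddCommMonoid M] (f : ℕ → M) {j t : ℕ}
    (ht : t ≤ j) :
    ∑ i ∈ range j, f i = ∑ i ∈ range (j - t), f i + ∑ s ∈ range t, f (j - 1 - s) := by
  conv_lhs => rw [← Nat.sub_add_cancel ht, sum_range_add, ← sum_range_reflect (f <| j - t + ·)]
  refine congrArg _ (sum_congr rfl fun s hs => congrArg f ?_)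
  have := mem_range.mp hs
  omega

lemma le_mul_card_records {S : ℕ → ℝ} {A : ℝ} {k : ℕ} (hA : 0 ≤ A) (h0 : S 0 ≤ A)
    (hstep : ∀ j < k, S (j + 1) ≤ S j + A) :
    ∀ j ≤ k, S j ≤ A * #{m ∈ range (j + 1) | ∀ l ≤ m, S l ≤ S m} := by
  intro j
  induction j using Nat.strong_induction_on with
  | _ j ih =>
  intro hj
  by_cases hrec : ∀ l ≤ j, S l ≤ S j
  · rcases j with _ | j
    · have : #{m ∈ range 1 | ∀ l ≤ m, S l ≤ S m} = 1 := by
        rw [card_eq_one]; exact ⟨0, by ext m; simp +contextual⟩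
      rw [this]
      simpa using h0
    · have hcard : #{m ∈ range (j + 2) | ∀ l ≤ m, S l ≤ S m}
          = #{m ∈ range (j + 1) | ∀ l ≤ m, S l ≤ S m} + 1 := by
        rw [range_add_one, filter_insert, if_pos hrec, card_insert_of_notMem (by simp)]
      rw [hcard]
      push_cast
      linarith [hstep j hj, ih j j.lt_succ_self (by omega)]
  · obtain ⟨l, hlj, hl⟩ : ∃ l ≤ j, S j < S l := by simpa using hrec
    have hlj : l < j := lt_of_le_of_ne hlj (by rintro rfl; exact lt_irrefl _ hl)
    calc S j ≤ S l := hl.le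
      _ ≤ A * #{m ∈ range (l + 1) | ∀ i ≤ m, S i ≤ S m} := ih l hlj (by omega)
      _ ≤ A * #{m ∈ range (j + 1) | ∀ i ≤ m, S i ≤ S m} := by gcongr

/-- Every final segment `b (j - t), …, b (j - 1)` has average at least `c`. -/
def IsHyperbolicTime (b : ℕ → ℝ) (c : ℝ) (j : ℕ) : Prop :=
  ∀ t ≤ j, t * c ≤ ∑ s ∈ range t, b (j - 1 - s)

theorem exists_hyperbolic_times {b : ℕ → ℝ} {A c : ℝ} {k : ℕ} (hA : 0 ≤ A) (hc : 0 ≤ c)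
    (hb : ∀ i < k, b i ≤ A) (hsum : k * (2 * c) ≤ ∑ i ∈ range k, b i) :
    ∃ P ⊆ range (k + 1), k * c ≤ A * #P ∧ ∀ j ∈ P, IsHyperbolicTime b c j := by
  set S : ℕ → ℝ := fun j => ∑ i ∈ range j, (b i - c)
  have hrecord {j : ℕ} (hj : ∀ l ≤ j, S l ≤ S j) : IsHyperbolicTime b c j := by
    intro t ht
    have hsplit := sum_range_eq_sum_range_sub_add (fun i => b i - c) ht
    have := hj (j - t) (Nat.sub_le j t)
    simp only [S, sum_sub_distrib, sum_const, card_range, nsmul_eq_mul] at hsplit this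
    linarith
  refine ⟨_, filter_subset _ _, ?_, fun j hj => hrecord (mem_filter.mp hj).2⟩
  have hSk : k * c ≤ S k := by
    simp only [S, sum_sub_distrib, sum_const, card_range, nsmul_eq_mul]
    linarith
  have hstep : ∀ j < k, S (j + 1) ≤ S j + A := fun j hj => by
    simp only [S, sum_range_succ]
    linarith [hb j hj]
  exact hSk.trans (le_mul_card_records hA (by simpa [S] using hA) hstep k le_rfl)

lemma exists_close_pair_of_card_lt (M : ℝ) {ε : ℝ} (hε : 0 < ε) {R : ℕ} (hR : 0 < R) :
    ∃ L : ℕ, ∀ (X : ℕ → ℝ) (P : Finset ℕ), (∀ m ∈ P, |X m| ≤ M) → L < #P →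
      ∃ i ∈ P, ∃ j ∈ P, i + R ≤ j ∧ |X i - X j| < ε := by
  refine ⟨#(Icc ⌊-M / ε⌋ ⌊M / ε⌋ ×ˢ range R), fun X P hX hP => ?_⟩
  -- pigeonholes: cells of width `ε` in space, residues mod `R` in time
  have hmaps : ∀ m ∈ P, (⌊X m / ε⌋, m % R) ∈ Icc ⌊-M / ε⌋ ⌊M / ε⌋ ×ˢ range R := by
    intro m hm
    have hXm := abs_le.mp (hX m hm)
    simp only [mem_product, mem_Icc, mem_range]
    exact ⟨⟨Int.floor_mono (div_le_div_of_nonneg_right hXm.1 hε.le),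
      Int.floor_mono (div_le_div_of_nonneg_right hXm.2 hε.le)⟩, Nat.mod_lt m hR⟩
  have hpair {i j : ℕ} (hij : i < j) (h : (⌊X i / ε⌋, i % R) = (⌊X j / ε⌋, j % R)) :
      i + R ≤ j ∧ |X i - X j| < ε := by
    obtain ⟨hfloor, hmod⟩ := Prod.ext_iff.mp h
    have hdvd : R ∣ j - i := (Nat.modEq_iff_dvd' hij.le).mp hmod
    refine ⟨by have := Nat.le_of_dvd (by omega) hdvd; omega, ?_⟩
    have := Int.abs_sub_lt_one_of_floor_eq_floor hfloor
    rwa [← sub_div, abs_div, abs_of_pos hε, div_lt_one hε] at this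
  obtain ⟨i, hi, j, hj, hne, hij⟩ := exists_ne_map_eq_of_card_lt_of_maps_to hP hmaps
  rcases hne.lt_or_gt with h | h
  · exact ⟨i, hi, j, hj, hpair h hij⟩
  · obtain ⟨hR, hX⟩ := hpair h hij.symm
    exact ⟨j, hj, i, hi, hR, hX⟩

lemma exists_deriv_le_mul_exp {G : Finset (ℝ → ℝ)} (hpos : ∀ g ∈ G, ∀ y : ℝ, 0 < deriv g y)
    (hUC : ∀ g ∈ G, UniformContinuous fun y : ℝ => Real.log (deriv g y)) {η : ℝ} (hη : 0 < η) :
    ∃ δ > 0, ∀ g ∈ G, ∀ y z : ℝ, |y - z| ≤ δ → deriv g y ≤ deriv g z * exp η := by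
  have hequi : UniformEquicontinuous fun g : G => fun y : ℝ => Real.log (deriv g y) :=
    uniformEquicontinuous_finite.mpr fun g => hUC g g.2
  obtain ⟨δ, hδ, hclose⟩ := Metric.uniformEquicontinuous_iff.mp hequi η hη
  refine ⟨δ / 2, by positivity, fun g hg y z hyz => ?_⟩
  have hlog := hclose y z (by rw [Real.dist_eq]; linarith) ⟨g, hg⟩
  rw [Real.dist_eq, abs_lt] at hlog
  calc deriv g y = exp (Real.log (deriv g y)) := (exp_log (hpos g hg y)).symm
    _ ≤ exp (Real.log (deriv g z) + η) := exp_le_exp.mpr (by linarith)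
    _ = deriv g z * exp η := by rw [exp_add, exp_log (hpos g hg z)]

section Contraction

variable {F : ℕ → ℝ → ℝ} {Z κ : ℕ → ℝ} {δ : ℝ} {r : ℕ}

lemma dist_seqOrbit_le (hF : ∀ t < r, Differentiable ℝ (F t))
    (hZ : ∀ t < r, Z (t + 1) = F t (Z t))
    (hκ : ∀ t < r, ∀ y ∈ closedBall (Z t) δ, ‖deriv (F t) y‖ ≤ κ t)
    (hprod : ∀ t ≤ r, ∏ s ∈ range t, κ s ≤ 1) {y : ℝ} (hy : y ∈ closedBall (Z 0) δ) :
    ∀ t ≤ r, dist (seqOrbit F y t) (Z t) ≤ δ * ∏ s ∈ range t, κ s := by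
  have hδ : 0 ≤ δ := nonempty_closedBall.mp ⟨y, hy⟩
  intro t
  induction t with
  | zero => simpa [seqOrbit] using hy
  | succ t ih =>
    intro ht
    have hdist := ih (by omega)
    have hmem : seqOrbit F y t ∈ closedBall (Z t) δ :=
      hdist.trans (mul_le_of_le_one_right hδ (hprod t (by omega)))
    have hκt : 0 ≤ κ t := (norm_nonneg _).trans (hκ t ht _ (mem_closedBall_self hδ))
    have hlip := (convex_closedBall (Z t) δ).norm_image_sub_le_of_norm_deriv_le
      (fun z _ => (hF t ht).differentiableAt) (hκ t ht) (mem_closedBall_self hδ) hmem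
    rw [← dist_eq_norm, ← dist_eq_norm] at hlip
    rw [seqOrbit, hZ t ht, prod_range_succ]
    calc dist (F t (seqOrbit F y t)) (F t (Z t)) ≤ κ t * dist (seqOrbit F y t) (Z t) := hlip
      _ ≤ κ t * (δ * ∏ s ∈ range t, κ s) := by gcongr
      _ = δ * ((∏ s ∈ range t, κ s) * κ t) := by ring

lemma exists_isFixedPt_deriv_lt_one (hF : ∀ t < r, Differentiable ℝ (F t))
    (hZ : ∀ t < r, Z (t + 1) = F t (Z t))
    (hκ : ∀ t < r, ∀ y ∈ closedBall (Z t) δ, ‖deriv (F t) y‖ ≤ κ t)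
    (hprod : ∀ t ≤ r, ∏ s ∈ range t, κ s ≤ 1) (hhalf : ∏ s ∈ range r, κ s ≤ 1 / 2)
    (hδ : 0 ≤ δ) (hret : dist (Z r) (Z 0) ≤ δ / 2) :
    ∃ u, Function.IsFixedPt (wordComp (seqWord F r)) u ∧ deriv (wordComp (seqWord F r)) u < 1 := by
  have hderiv := hasDerivAt_wordComp_seqWord hF
  have hmaps : Set.MapsTo (wordComp (seqWord F r)) (closedBall (Z 0) δ) (closedBall (Z 0) δ) := by
    intro y hy
    rw [mem_closedBall, wordComp_seqWord]
    calc dist (seqOrbit F y r) (Z 0) ≤ dist (seqOrbit F y r) (Z r) + dist (Z r) (Z 0) :=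
          dist_triangle _ _ _
      _ ≤ δ * (1 / 2) + δ / 2 := by
          gcongr
          exact (dist_seqOrbit_le hF hZ hκ hprod hy r le_rfl).trans (by gcongr)
      _ = δ := by ring
  have hcont : ContinuousOn (wordComp (seqWord F r)) (closedBall (Z 0) δ) :=
    fun y _ => (hderiv y).continuousAt.continuousWithinAt
  rw [Real.closedBall_eq_Icc] at hmaps hcont
  obtain ⟨u, hu, hfix⟩ := exists_mem_Icc_isFixedPt_of_mapsTo hcont (by linarith) hmaps
  rw [← Real.closedBall_eq_Icc] at hu
  refine ⟨u, hfix, ?_⟩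
  calc deriv (wordComp (seqWord F r)) u = ∏ s ∈ range r, deriv (F s) (seqOrbit F u s) :=
        (hderiv u).deriv
    _ ≤ ∏ s ∈ range r, ‖deriv (F s) (seqOrbit F u s)‖ := by
        rw [← norm_prod]; exact Real.le_norm_self _
    _ ≤ ∏ s ∈ range r, κ s := by
        refine prod_le_prod (fun _ _ => norm_nonneg _) fun s hs => hκ s (mem_range.mp hs) _ ?_
        exact (dist_seqOrbit_le hF hZ hκ hprod hu s (mem_range.mp hs).le).trans
          (mul_le_of_le_one_right hδ (hprod s (mem_range.mp hs).le))
    _ < 1 := by linarith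

end Contraction

section Expansion

variable {G : Finset (ℝ → ℝ)} {C : ℝ}

lemma deriv_wordComp_le_pow (hdiff : ∀ g ∈ G, Differentiable ℝ g)
    (hpos : ∀ g ∈ G, ∀ y, 0 < deriv g y) (hle : ∀ g ∈ G, ∀ y, deriv g y ≤ C)
    {w : List (ℝ → ℝ)} (hw : IsWord G w) (x : ℝ) : deriv (wordComp w) x ≤ C ^ w.length := by
  obtain ⟨g, hgw, hmem⟩ := exists_seqWord_eq w
  have hg : ∀ i < w.length, g i ∈ G := fun i hi => hw _ (hmem i hi)
  conv_lhs => rw [← hgw, (hasDerivAt_wordComp_seqWord (fun i hi => hdiff _ (hg i hi)) x).deriv]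
  calc ∏ i ∈ range w.length, deriv (g i) (seqOrbit g x i) ≤ ∏ _i ∈ range w.length, C :=
        prod_le_prod (fun i hi => (hpos _ (hg i (mem_range.mp hi)) _).le)
          fun i hi => hle _ (hg i (mem_range.mp hi)) _
    _ = C ^ w.length := by rw [prod_const, card_range]

lemma one_mem_expansions (G : Finset (ℝ → ℝ)) (n : ℕ) (x : ℝ) :
    (1 : ℝ) ∈ {d : ℝ | ∃ w : List (ℝ → ℝ), IsWord G w ∧ w.length ≤ n ∧
      d = deriv (wordComp w) x} :=
  ⟨[], by simp [IsWord], by simp, by simp [wordComp]⟩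

lemma one_le_maxExp (hdiff : ∀ g ∈ G, Differentiable ℝ g)
    (hpos : ∀ g ∈ G, ∀ y, 0 < deriv g y) (hle : ∀ g ∈ G, ∀ y, deriv g y ≤ C) (hC : 1 ≤ C)
    (n : ℕ) (x : ℝ) : 1 ≤ maxExp G n x := by
  refine le_csSup ⟨C ^ n, ?_⟩ (one_mem_expansions G n x)
  rintro _ ⟨w, hw, hwn, rfl⟩
  exact (deriv_wordComp_le_pow hdiff hpos hle hw x).trans (pow_le_pow_right₀ hC hwn)

lemma exists_word_of_lt_maxExp {n : ℕ} {x a : ℝ} (h : a < maxExp G n x) :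
    ∃ w, IsWord G w ∧ w.length ≤ n ∧ a < deriv (wordComp w) x := by
  obtain ⟨_, ⟨w, hw, hwn, rfl⟩, ha⟩ := exists_lt_of_lt_csSup ⟨1, one_mem_expansions G n x⟩ h
  exact ⟨w, hw, hwn, ha⟩

lemma exists_long_word_of_lt_expExponent (hdiff : ∀ g ∈ G, Differentiable ℝ g)
    (hpos : ∀ g ∈ G, ∀ y, 0 < deriv g y) (hle : ∀ g ∈ G, ∀ y, deriv g y ≤ C) (hC : 1 ≤ C)
    {x lam : ℝ} (hlam : 0 < lam) (hx : ENNReal.ofReal lam < expExponent G x) (K : ℕ) :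
    ∃ w, IsWord G w ∧ K ≤ w.length ∧ exp (w.length * lam) < deriv (wordComp w) x := by
  obtain ⟨n, hKn, hn⟩ := frequently_atTop.mp
    (frequently_lt_of_lt_limsup (by isBoundedDefault) hx) ⌈K * Real.log C / lam⌉₊
  have hq : lam < Real.log (maxExp G n x) / n := (ENNReal.ofReal_lt_ofReal_iff'.mp hn).1
  have hn0 : (0 : ℝ) < n := by
    rcases (Nat.cast_nonneg (α := ℝ) n).eq_or_lt with h | h
    · rw [← h, div_zero] at hq; linarith
    · exact h
  have hμ : exp (n * lam) < maxExp G n x := by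
    rw [← lt_log_iff_exp_lt (one_pos.trans_le (one_le_maxExp hdiff hpos hle hC n x))]
    rwa [lt_div_iff₀ hn0, mul_comm] at hq
  obtain ⟨w, hw, hwn, hwμ⟩ := exists_word_of_lt_maxExp hμ
  refine ⟨w, hw, ?_, (exp_le_exp.mpr ?_).trans_lt hwμ⟩
  · have hexp : n * lam < w.length * Real.log C := by
      rw [← Real.log_pow, lt_log_iff_exp_lt (by positivity)]
      exact hwμ.trans_le (deriv_wordComp_le_pow hdiff hpos hle hw x)
    have hK : K * Real.log C ≤ n * lam := by
      rw [← div_le_iff₀ hlam]; exact Nat.ceil_le.mp hKn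
    exact_mod_cast (lt_of_mul_lt_mul_right (hK.trans_lt hexp) (log_nonneg hC)).le
  · gcongr

lemma exists_many_hyperbolic_times (hdiff : ∀ g ∈ G, Differentiable ℝ g)
    (hpos : ∀ g ∈ G, ∀ y, 0 < deriv g y) (hle : ∀ g ∈ G, ∀ y, deriv g y ≤ C) (hC : 1 ≤ C)
    {x lam : ℝ} (hlam : 0 < lam) (hx : ENNReal.ofReal lam < expExponent G x) (L : ℕ) :
    ∃ (g : ℕ → ℝ → ℝ) (k : ℕ), (∀ i < k, g i ∈ G) ∧ ∃ P ⊆ range (k + 1), L < #P ∧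
      ∀ j ∈ P, IsHyperbolicTime (fun i => Real.log (deriv (g i) (seqOrbit g x i))) (lam / 2) j := by
  set A := Real.log C + 1
  have hA : 0 < A := by linarith [log_nonneg hC]
  obtain ⟨w, hw, hKw, hwexp⟩ :=
    exists_long_word_of_lt_expExponent hdiff hpos hle hC hlam hx (⌈A * L / (lam / 2)⌉₊ + 1)
  obtain ⟨g, hgw, hmem⟩ := exists_seqWord_eq w
  set k := w.length
  have hg : ∀ i < k, g i ∈ G := fun i hi => hw _ (hmem i hi)
  have hgpos : ∀ i < k, 0 < deriv (g i) (seqOrbit g x i) := fun i hi => hpos _ (hg i hi) _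
  have hsum : k * (2 * (lam / 2)) ≤ ∑ i ∈ range k, Real.log (deriv (g i) (seqOrbit g x i)) := by
    rw [← Real.log_prod fun i hi => (hgpos i (mem_range.mp hi)).ne',
      ← (hasDerivAt_wordComp_seqWord (fun i hi => hdiff _ (hg i hi)) x).deriv, hgw,
      le_log_iff_exp_le ((exp_pos _).trans hwexp)]
    calc exp (k * (2 * (lam / 2))) = exp (k * lam) := by ring_nf
      _ ≤ _ := hwexp.le
  have hb : ∀ i < k, Real.log (deriv (g i) (seqOrbit g x i)) ≤ A := fun i hi =>
    (log_le_log (hgpos i hi) (hle _ (hg i hi) _)).trans (by linarith)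
  obtain ⟨P, hPk, hP, hhyp⟩ := exists_hyperbolic_times hA.le (by positivity) hb hsum
  refine ⟨g, k, hg, P, hPk, ?_, hhyp⟩
  have hkL : A * L < k * (lam / 2) := by
    rw [← div_lt_iff₀ (by positivity)]
    exact_mod_cast Nat.lt_of_ceil_lt hKw
  exact_mod_cast lt_of_mul_lt_mul_left (hkL.trans_le hP) hA.le

end Expansion

theorem exists_attracting_fixedPoint_of_return {G : Finset (ℝ → ℝ)} {δ η c : ℝ}
    (hdiff : ∀ g ∈ G, Differentiable ℝ g) (hpos : ∀ g ∈ G, ∀ y, 0 < deriv g y)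
    (hinv : ∀ g ∈ G, ∃ h ∈ G, ∀ y, h (g y) = y)
    (hdist : ∀ g ∈ G, ∀ y z : ℝ, |y - z| ≤ δ → deriv g y ≤ deriv g z * exp η)
    {g : ℕ → ℝ → ℝ} {x : ℝ} {i j : ℕ} (hij : i ≤ j) (hg : ∀ l < j, g l ∈ G)
    (hhyp : IsHyperbolicTime (fun l => Real.log (deriv (g l) (seqOrbit g x l))) c j)
    (hrate : 1 ≤ (j - i : ℕ) * (c - η))
    (hret : |seqOrbit g x i - seqOrbit g x j| ≤ δ / 2) :
    ∃ (Φ : List (ℝ → ℝ)) (u : ℝ), IsWord G Φ ∧ wordComp Φ u = u ∧ deriv (wordComp Φ) u < 1 := by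
  choose! ginv hginv hleft using hinv
  set r := j - i
  set X := seqOrbit g x
  -- the inverse branches along the orbit, read backwards from time `j`
  set F : ℕ → ℝ → ℝ := fun t => ginv (g (j - 1 - t))
  set Z : ℕ → ℝ := fun t => X (j - t)
  have hgG : ∀ t < r, g (j - 1 - t) ∈ G := fun t ht => hg _ (by omega)
  have hFG : ∀ t < r, F t ∈ G := fun t ht => hginv _ (hgG t ht)
  have hZX : ∀ t < r, Z t = g (j - 1 - t) (X (j - 1 - t)) := fun t ht => by
    simp only [Z, X, show j - t = j - 1 - t + 1 by omega, seqOrbit]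
  have hZ : ∀ t < r, Z (t + 1) = F t (Z t) := fun t ht => by
    simp only [hZX t ht, F, hleft _ (hgG t ht), Z, show j - (t + 1) = j - 1 - t by omega]
  have hFZ : ∀ t < r, deriv (F t) (Z t) = exp (-Real.log (deriv (g (j - 1 - t)) (X (j - 1 - t)))) :=
    fun t ht => by
      rw [exp_neg, exp_log (hpos _ (hgG t ht) _), hZX t ht]
      exact eq_inv_of_mul_eq_one_left (deriv_comp_mul_deriv_eq_one
        (hdiff _ (hgG t ht) _) (hdiff _ (hFG t ht) _) (hleft _ (hgG t ht)))
  set κ : ℕ → ℝ := fun t => exp (η - Real.log (deriv (g (j - 1 - t)) (X (j - 1 - t))))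
  have hκ : ∀ t < r, ∀ y ∈ closedBall (Z t) δ, ‖deriv (F t) y‖ ≤ κ t := by
    intro t ht y hy
    rw [Real.norm_of_nonneg (hpos _ (hFG t ht) y).le]
    calc deriv (F t) y ≤ deriv (F t) (Z t) * exp η :=
          hdist _ (hFG t ht) y (Z t) (by rwa [mem_closedBall, Real.dist_eq] at hy)
      _ = κ t := by rw [hFZ t ht, ← exp_add, neg_add_eq_sub]
  have hprod : ∀ t ≤ r, ∏ s ∈ range t, κ s ≤ exp (t * (η - c)) := by
    intro t ht
    rw [← exp_sum, exp_le_exp]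
    have := hhyp t (by omega)
    simp only [sum_sub_distrib, sum_const, card_range, nsmul_eq_mul] at this ⊢
    linarith
  have hcη : 0 < c - η := by
    by_contra h
    nlinarith [(Nat.cast_nonneg (α := ℝ) r)]
  have hδ : 0 ≤ δ := by linarith [abs_nonneg (X i - X j)]
  have hZr : Z r = X i := by simp only [Z, r, Nat.sub_sub_self hij]
  obtain ⟨u, hfix, hu⟩ := exists_isFixedPt_deriv_lt_one (fun t ht => hdiff _ (hFG t ht)) hZ hκ
    (fun t ht => (hprod t ht).trans (exp_le_one_iff.mpr
      (mul_nonpos_of_nonneg_of_nonpos (Nat.cast_nonneg t) (by linarith))))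
    ((hprod r le_rfl).trans ((exp_le_exp.mpr (by linarith)).trans exp_neg_one_lt_half.le))
    hδ (by rwa [hZr, Real.dist_eq])
  exact ⟨seqWord F r, u, isWord_seqWord hFG, hfix, hu⟩

/-- If no word of `G` has a hyperbolic (attracting) fixed point, then the hyperbolic
set `E⁺ = {x | λ_*(x) > 0}` is empty, i.e. `λ_*(x) = 0` for every `x`. -/
theorem no_hyperbolic_fixed_point_implies_hyperbolic_set_empty
    (G : Finset (ℝ → ℝ))
    (hC1 : ∀ g ∈ G, ContDiff ℝ 1 g)
    (hpos : ∀ g ∈ G, ∀ y : ℝ, 0 < deriv g y)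
    (hinv : ∀ g ∈ G, ∃ h ∈ G, (∀ x : ℝ, h (g x) = x) ∧ (∀ x : ℝ, g (h x) = x))
    (C₀ : ℝ) (hC₀ : 1 ≤ C₀)
    (hbound : ∀ g ∈ G, ∀ y : ℝ, 1 / C₀ ≤ deriv g y ∧ deriv g y ≤ C₀)
    (hUC : ∀ g ∈ G, UniformContinuous fun y : ℝ => Real.log (deriv g y))
    (hbddorbit : ∀ x : ℝ,
      Bornology.IsBounded {y : ℝ | ∃ w : List (ℝ → ℝ), IsWord G w ∧ y = wordComp w x})
    (hnofix : ¬ ∃ (Φ : List (ℝ → ℝ)) (u : ℝ), IsWord G Φ ∧ wordComp Φ u = u ∧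
      deriv (wordComp Φ) u < 1) :
    ∀ x : ℝ, expExponent G x = 0 := by
  have hdiff : ∀ g ∈ G, Differentiable ℝ g := fun g hg => (hC1 g hg).differentiable one_ne_zero
  intro x
  by_contra hne
  obtain ⟨lam, -, hlam, hlamx⟩ := ENNReal.lt_iff_exists_real_btwn.mp (pos_iff_ne_zero.mpr hne)
  rw [ENNReal.ofReal_pos] at hlam
  obtain ⟨M, hM⟩ := (hbddorbit x).subset_closedBall 0
  obtain ⟨δ, hδ, hdist⟩ := exists_deriv_le_mul_exp hpos hUC (η := lam / 4) (by positivity)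
  obtain ⟨R, hR⟩ := exists_nat_gt (4 / lam)
  obtain ⟨L, hL⟩ := exists_close_pair_of_card_lt M (half_pos hδ)
    (Nat.cast_pos.mp ((div_pos four_pos hlam).trans hR))
  obtain ⟨g, k, hg, P, hPk, hLP, hhyp⟩ := exists_many_hyperbolic_times hdiff hpos
    (fun g hg y => (hbound g hg y).2) hC₀ hlam hlamx L
  have horbit : ∀ m ∈ P, |seqOrbit g x m| ≤ M := fun m hm => by
    have hmk : m ≤ k := Nat.lt_succ_iff.mp (mem_range.mp (hPk hm))
    simpa [← wordComp_seqWord] using hM ⟨_, isWord_seqWord fun i hi => hg i (hi.trans_le hmk), rfl⟩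
  obtain ⟨i, -, j, hj, hij, hclose⟩ := hL _ P horbit hLP
  have hrate : 1 ≤ (j - i : ℕ) * (lam / 2 - lam / 4) := by
    rw [div_lt_iff₀ hlam] at hR
    have : (R : ℝ) ≤ (j - i : ℕ) := by exact_mod_cast Nat.le_sub_of_add_le' hij
    nlinarith
  exact hnofix <| exists_attracting_fixedPoint_of_return hdiff hpos
    (fun g hg => (hinv g hg).imp fun _ ⟨hh, hleft, _⟩ => ⟨hh, hleft⟩) hdist (by omega)
    (fun l hl => hg l (by have := mem_range.mp (hPk hj); omega)) (hhyp j hj) hrate hclose.le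
end

section
/- Let m ≥ 1 be an integer, let a > 0 and 0 < ε < a, and let λ₁, …, λ_m be real numbers with λ₁ + ⋯ + λ_m ≤ −a·m. Then there exists an index q with 1 ≤ q ≤ m that is ε-regular, i.e., for every i with 1 ≤ i ≤ q one has λ_i + λ_{i+1} + ⋯ + λ_q + (q − i + 1)·ε < 0, and which moreover satisfies λ₁ + ⋯ + λ_q ≤ (−a + ε)·m. -/
/-!
Let `T j = λ₁ + ⋯ + λ_j + j·ε`, so `T 0 = 0` and `T m ≤ (-a + ε)·m < 0`. Take `q` to be the
first minimiser of `T` on `{0, …, m}`. Then `q ≥ 1`, and for `i ≤ q` the strict inequality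
`T q < T (i - 1)` is exactly the `ε`-regularity inequality at `i`; finally
`λ₁ + ⋯ + λ_q ≤ T q ≤ T m`.
-/

open Finset

theorem Nat.exists_first_min_le {α : Type*} [LinearOrder α] (f : ℕ → α) (n : ℕ) :
    ∃ q ≤ n, (∀ k ≤ n, f q ≤ f k) ∧ ∀ j < q, f q < f j := by
  classical
  have hex : ∃ q, q ≤ n ∧ ∀ k ≤ n, f q ≤ f k := by
    obtain ⟨q, hq, hmin⟩ := (range (n + 1)).exists_min_image f ⟨0, by simp⟩
    exact ⟨q, by simpa [Nat.lt_succ_iff] using hq,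
      fun k hk => hmin k (by simpa [Nat.lt_succ_iff] using hk)⟩
  obtain ⟨hqn, hmin⟩ := Nat.find_spec hex
  refine ⟨Nat.find hex, hqn, hmin, fun j hj => lt_of_not_ge fun hjq => ?_⟩
  exact Nat.find_min hex hj ⟨hj.le.trans hqn, fun k hk => hjq.trans (hmin k hk)⟩

theorem sum_Icc_one_add_sum_Icc_succ {M : Type*} [AddCommMonoid M] (f : ℕ → M) {j q : ℕ}
    (hjq : j ≤ q) : ∑ k ∈ Icc 1 j, f k + ∑ k ∈ Icc (j + 1) q, f k = ∑ k ∈ Icc 1 q, f k := by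
  have hIcc (n : ℕ) : Icc 1 n = Ioc 0 n := Icc_add_one_left_eq_Ioc 0 n
  rw [hIcc, hIcc, Icc_add_one_left_eq_Ioc]
  exact sum_Ioc_consecutive f (Nat.zero_le j) hjq

theorem sum_Icc_succ_add_card_mul_neg_of_lt (lam : ℕ → ℝ) (ε : ℝ) {j q : ℕ} (hjq : j < q)
    (h : ∑ k ∈ Icc 1 q, lam k + q * ε < ∑ k ∈ Icc 1 j, lam k + j * ε) :
    ∑ k ∈ Icc (j + 1) q, lam k + ((q - (j + 1) + 1 : ℕ) : ℝ) * ε < 0 := by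
  have hcard : ((q - (j + 1) + 1 : ℕ) : ℝ) = q - j := by
    rw [show q - (j + 1) + 1 = q - j by omega, Nat.cast_sub hjq.le]
  rw [hcard]
  rw [← sum_Icc_one_add_sum_Icc_succ lam hjq.le] at h
  linarith

theorem pliss_lemma_regular_index_exists_general
    (m : ℕ) (hm : 1 ≤ m) (a ε : ℝ) (hε : 0 < ε) (hεa : ε < a)
    (lam : ℕ → ℝ) (hsum : ∑ i ∈ Finset.Icc 1 m, lam i ≤ -a * m) :
    ∃ q : ℕ, 1 ≤ q ∧ q ≤ m ∧
      (∀ i : ℕ, 1 ≤ i → i ≤ q →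
        (∑ k ∈ Finset.Icc i q, lam k) + ((q - i + 1 : ℕ) : ℝ) * ε < 0) ∧
      (∑ i ∈ Finset.Icc 1 q, lam i) ≤ (-a + ε) * m := by
  set T : ℕ → ℝ := fun j => ∑ i ∈ Icc 1 j, lam i + j * ε with hT
  obtain ⟨q, hqm, hmin, hfirst⟩ := Nat.exists_first_min_le T m
  have hTm : T m ≤ (-a + ε) * m := by simp only [hT]; linarith
  have hTm_neg : T m < 0 := by
    have : (1 : ℝ) ≤ m := by exact_mod_cast hm
    nlinarith
  have hq : q ≠ 0 := by
    rintro rfl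
    have hT0 : T 0 = 0 := by simp [hT]
    linarith [hmin m le_rfl]
  refine ⟨q, Nat.one_le_iff_ne_zero.mpr hq, hqm, fun i hi hiq => ?_, ?_⟩
  · obtain ⟨j, rfl⟩ := Nat.exists_eq_add_of_le' hi
    exact sum_Icc_succ_add_card_mul_neg_of_lt lam ε hiq (hfirst j hiq)
  · have hqε : 0 ≤ (q : ℝ) * ε := by positivity
    have hTq := hmin m le_rfl
    simp only [hT] at hTq hTm
    linarith

/-- The Pliss-type lemma: if `λ₁ + ⋯ + λ_m ≤ -a·m` and `0 < ε < a`, then there is an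
`ε`-regular index `q` with `1 ≤ q ≤ m` satisfying `λ₁ + ⋯ + λ_q ≤ (-a + ε)·m`.
An index `q` is `ε`-regular if `λ_i + ⋯ + λ_q + (q - i + 1)·ε < 0` for all `1 ≤ i ≤ q`. -/
theorem pliss_lemma_regular_index_exists
    (m : ℕ) (hm : 1 ≤ m) (a ε : ℝ) (ha : 0 < a) (hε : 0 < ε) (hεa : ε < a)
    (lam : ℕ → ℝ) (hsum : ∑ i ∈ Finset.Icc 1 m, lam i ≤ -a * m) :
    ∃ q : ℕ, 1 ≤ q ∧ q ≤ m ∧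
      (∀ i : ℕ, 1 ≤ i → i ≤ q →
        (∑ k ∈ Finset.Icc i q, lam k) + ((q - i + 1 : ℕ) : ℝ) * ε < 0) ∧
      (∑ i ∈ Finset.Icc 1 q, lam i) ≤ (-a + ε) * m :=
  pliss_lemma_regular_index_exists_general m hm a ε hε hεa lam hsum
end

section
/- Let G be a finite set of C¹ diffeomorphisms of ℝ, closed under taking inverses, with every g ∈ G having everywhere positive derivative. Let ε > 0, let g ∈ G, and let x ∈ ℝ with λ_*(x) = 0, and set y = g(x). Then the series g_ε(x) = Σ_{n=0}^∞ e^{−nε}·μ_n(x) and g_ε(y) = Σ_{n=0}^∞ e^{−nε}·μ_n(y) both converge, and e^{−ε}·g_ε(x) ≤ g'(x)·g_ε(y) ≤ e^{ε}·g_ε(x). -/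
/-!
Composing a maximal word at `g x` with the generator `g` gives a word at `x` one letter longer,
so `g'(x) μ_n(g x) ≤ μ_{n+1}(x)`; applying this to the inverse of `g` at `g x` gives
`μ_n(x) ≤ g'(x) μ_{n+1}(g x)`. Weighted by `e^{-nε}`, a shift of the index by one costs a
factor `e^{±ε}`, which gives both inequalities. Convergence at `x` holds because `λ_*(x) = 0`
makes `μ_n(x)` grow more slowly than `e^{nε/2}`, and at `g x` by comparison with the series at `x`.
-/

open Real Filter

section Words

lemma wordComp_append_singleton (w : List (ℝ → ℝ)) (g : ℝ → ℝ) :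
    wordComp (w ++ [g]) = wordComp w ∘ g := by
  induction w with
  | nil => rfl
  | cons a w ih => exact congrArg (a ∘ ·) ih

lemma IsWord.nil (G : Finset (ℝ → ℝ)) : IsWord G [] := by
  simp [IsWord]

lemma IsWord.append_singleton {G : Finset (ℝ → ℝ)} {w : List (ℝ → ℝ)} {g : ℝ → ℝ}
    (hw : IsWord G w) (hg : g ∈ G) : IsWord G (w ++ [g]) := by
  intro a ha
  rcases List.mem_append.1 ha with ha | ha
  · exact hw a ha
  · rwa [List.mem_singleton.1 ha]

lemma IsWord.differentiable {G : Finset (ℝ → ℝ)} (hG : ∀ g ∈ G, Differentiable ℝ g)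
    {w : List (ℝ → ℝ)} (hw : IsWord G w) : Differentiable ℝ (wordComp w) := by
  induction w with
  | nil => exact differentiable_id
  | cons g w ih =>
    exact (hG g (hw g List.mem_cons_self)).comp (ih fun a ha => hw a (List.mem_cons_of_mem g ha))

end Words

section MaxExp

variable (G : Finset (ℝ → ℝ)) (n : ℕ) (x : ℝ)

def wordDerivSet : Set ℝ :=
  {d : ℝ | ∃ w : List (ℝ → ℝ), IsWord G w ∧ w.length ≤ n ∧ d = deriv (wordComp w) x}

lemma wordDerivSet_finite : (wordDerivSet G n x).Finite := by
  have hsub : wordDerivSet G n x ⊆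
      (fun w : List G => deriv (wordComp (w.map Subtype.val)) x) '' {w | w.length ≤ n} := by
    rintro d ⟨w, hw, hlen, rfl⟩
    refine ⟨w.pmap Subtype.mk hw, List.length_pmap.trans_le hlen, ?_⟩
    exact congrArg (fun l => deriv (wordComp l) x)
      ((List.map_pmap hw).trans ((List.pmap_eq_map hw).trans (List.map_id w)))
  exact ((List.finite_length_le _ n).image _).subset hsub

lemma le_maxExp {w : List (ℝ → ℝ)} (hw : IsWord G w) (hlen : w.length ≤ n) :
    deriv (wordComp w) x ≤ maxExp G n x :=
  le_csSup (wordDerivSet_finite G n x).bddAbove ⟨w, hw, hlen, rfl⟩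

lemma one_le_maxExp_s9 : 1 ≤ maxExp G n x := by
  simpa [wordComp] using le_maxExp G n x (IsWord.nil G) (Nat.zero_le n)

lemma maxExp_nonneg : 0 ≤ maxExp G n x :=
  zero_le_one.trans (one_le_maxExp_s9 G n x)

lemma exists_word_deriv_eq_maxExp :
    ∃ w : List (ℝ → ℝ), IsWord G w ∧ w.length ≤ n ∧ deriv (wordComp w) x = maxExp G n x := by
  have hne : (wordDerivSet G n x).Nonempty := ⟨_, [], IsWord.nil G, Nat.zero_le n, rfl⟩
  obtain ⟨w, hw, hlen, hmax⟩ := hne.csSup_mem (wordDerivSet_finite G n x)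
  exact ⟨w, hw, hlen, hmax.symm⟩

end MaxExp

section Generators

variable {G : Finset (ℝ → ℝ)} (hG : ∀ g ∈ G, Differentiable ℝ g)
include hG

lemma deriv_mul_maxExp_le_maxExp_succ {g : ℝ → ℝ} (hg : g ∈ G) (n : ℕ) (x : ℝ) :
    deriv g x * maxExp G n (g x) ≤ maxExp G (n + 1) x := by
  obtain ⟨w, hw, hlen, hmax⟩ := exists_word_deriv_eq_maxExp G n (g x)
  have hchain : deriv (wordComp (w ++ [g])) x = deriv (wordComp w) (g x) * deriv g x := by
    rw [wordComp_append_singleton]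
    exact deriv_comp x (hw.differentiable hG _) (hG g hg x)
  calc deriv g x * maxExp G n (g x) = deriv (wordComp (w ++ [g])) x := by
        rw [hchain, hmax, mul_comm]
    _ ≤ maxExp G (n + 1) x :=
        le_maxExp G (n + 1) x (hw.append_singleton hg) (by simpa using hlen)

lemma maxExp_le_deriv_mul_maxExp_succ {g h : ℝ → ℝ} (hg : g ∈ G) (hh : h ∈ G)
    (hhg : Function.LeftInverse h g) (n : ℕ) (x : ℝ) (hgx : 0 ≤ deriv g x) :
    maxExp G n x ≤ deriv g x * maxExp G (n + 1) (g x) := by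
  have hinv : deriv h (g x) * deriv g x = 1 := by
    have hcomp := deriv_comp x (hG h hh (g x)) (hG g hg x)
    rwa [show h ∘ g = id from funext hhg, deriv_id, eq_comm] at hcomp
  calc maxExp G n x = deriv g x * (deriv h (g x) * maxExp G n (h (g x))) := by
        rw [hhg x, ← mul_assoc, mul_comm (deriv g x), hinv, one_mul]
    _ ≤ deriv g x * maxExp G (n + 1) (g x) :=
        mul_le_mul_of_nonneg_left (deriv_mul_maxExp_le_maxExp_succ hG hh n (g x)) hgx

end Generators

section WeightedSeries

variable {ε : ℝ} {a b : ℕ → ℝ}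

lemma exp_neg_natCast_succ_mul (n : ℕ) (ε : ℝ) :
    exp (-((n + 1 : ℕ) : ℝ) * ε) = exp (-ε) * exp (-(n : ℝ) * ε) := by
  rw [← exp_add]
  push_cast
  ring_nf

lemma eventually_le_exp_of_limsup_log_div_eq_zero
    (h : limsup (fun n : ℕ => ENNReal.ofReal (log (a n) / n)) atTop = 0) {δ : ℝ} (hδ : 0 < δ) :
    ∀ᶠ n : ℕ in atTop, a n ≤ exp (n * δ) := by
  have hlt : limsup (fun n : ℕ => ENNReal.ofReal (log (a n) / n)) atTop < ENNReal.ofReal δ := by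
    rw [h]
    exact ENNReal.ofReal_pos.2 hδ
  filter_upwards [eventually_lt_of_limsup_lt hlt, eventually_gt_atTop 0] with n hn hn0
  rcases le_or_gt (a n) 0 with ha | ha
  · exact ha.trans (exp_pos _).le
  · have hlog : log (a n) / n < δ := (ENNReal.ofReal_lt_ofReal_iff hδ).1 hn
    rw [div_lt_iff₀ (by exact_mod_cast hn0)] at hlog
    exact ((log_lt_iff_lt_exp ha).1 (by linarith)).le

lemma summable_exp_neg_mul_of_eventually_le_exp (ha : ∀ n, 0 ≤ a n) {δ : ℝ} (hδε : δ < ε)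
    (h : ∀ᶠ n : ℕ in atTop, a n ≤ exp (n * δ)) :
    Summable fun n : ℕ => exp (-(n : ℝ) * ε) * a n := by
  refine Summable.of_norm_bounded_eventually_nat
    (Real.summable_exp_nat_mul_iff.2 (sub_neg.2 hδε)) ?_
  filter_upwards [h] with n hn
  rw [Real.norm_of_nonneg (mul_nonneg (exp_pos _).le (ha n))]
  calc exp (-(n : ℝ) * ε) * a n ≤ exp (-(n : ℝ) * ε) * exp (n * δ) := by gcongr
    _ = exp (n * (δ - ε)) := by rw [← exp_add]; ring_nf

lemma summable_exp_neg_mul_of_mul_le_succ {c : ℝ} (hc : 0 < c) (hb : ∀ n, 0 ≤ b n)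
    (hba : ∀ n, c * b n ≤ a (n + 1)) (ha : Summable fun n : ℕ => exp (-(n : ℝ) * ε) * a n) :
    Summable fun n : ℕ => exp (-(n : ℝ) * ε) * b n := by
  refine Summable.of_nonneg_of_le (fun n => mul_nonneg (exp_pos _).le (hb n)) (fun n => ?_)
    (((summable_nat_add_iff 1).2 ha).mul_left (exp ε / c))
  have hbn : b n ≤ a (n + 1) / c := by rw [le_div_iff₀ hc, mul_comm]; exact hba n
  calc exp (-(n : ℝ) * ε) * b n ≤ exp (-(n : ℝ) * ε) * (a (n + 1) / c) := by gcongr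
    _ = exp ε / c * (exp (-((n + 1 : ℕ) : ℝ) * ε) * a (n + 1)) := by
      rw [exp_neg_natCast_succ_mul, exp_neg]
      field_simp

lemma mul_tsum_le_exp_mul_tsum_of_mul_le_succ {c d : ℝ} (hd : 0 ≤ d) (ha0 : 0 ≤ a 0)
    (hba : ∀ n, c * b n ≤ d * a (n + 1))
    (hb : Summable fun n : ℕ => exp (-(n : ℝ) * ε) * b n)
    (ha : Summable fun n : ℕ => exp (-(n : ℝ) * ε) * a n) :
    c * ∑' n : ℕ, exp (-(n : ℝ) * ε) * b n ≤
      exp ε * (d * ∑' n : ℕ, exp (-(n : ℝ) * ε) * a n) := by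
  have hterm : ∀ n : ℕ, c * (exp (-(n : ℝ) * ε) * b n) ≤
      exp ε * (d * (exp (-((n + 1 : ℕ) : ℝ) * ε) * a (n + 1))) := fun n =>
    calc c * (exp (-(n : ℝ) * ε) * b n) = exp (-(n : ℝ) * ε) * (c * b n) := mul_left_comm ..
      _ ≤ exp (-(n : ℝ) * ε) * (d * a (n + 1)) := mul_le_mul_of_nonneg_left (hba n) (exp_pos _).le
      _ = exp ε * (d * (exp (-((n + 1 : ℕ) : ℝ) * ε) * a (n + 1))) := by
        rw [exp_neg_natCast_succ_mul, exp_neg]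
        field_simp
  calc c * ∑' n : ℕ, exp (-(n : ℝ) * ε) * b n
      = ∑' n : ℕ, c * (exp (-(n : ℝ) * ε) * b n) := tsum_mul_left.symm
    _ ≤ ∑' n : ℕ, exp ε * (d * (exp (-((n + 1 : ℕ) : ℝ) * ε) * a (n + 1))) :=
        (hb.mul_left c).tsum_le_tsum hterm
          ((((summable_nat_add_iff 1).2 ha).mul_left d).mul_left _)
    _ = exp ε * (d * ∑' n : ℕ, exp (-((n + 1 : ℕ) : ℝ) * ε) * a (n + 1)) := by
        rw [tsum_mul_left, tsum_mul_left]
    _ ≤ exp ε * (d * ∑' n : ℕ, exp (-(n : ℝ) * ε) * a n) := by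
        refine mul_le_mul_of_nonneg_left (mul_le_mul_of_nonneg_left ?_ hd) (exp_pos _).le
        rw [ha.tsum_eq_zero_add]
        exact le_add_of_nonneg_left (mul_nonneg (exp_pos _).le ha0)

end WeightedSeries

/-- Tempering estimate for the Lyapunov gauge function `g_ε(x) = Σ e^{-nε} μ_n(x)`:
at a point `x` with `λ_*(x) = 0` and for a generator `g ∈ G` with `y = g(x)`, both
series converge and `e^{-ε} g_ε(x) ≤ g'(x) · g_ε(y) ≤ e^{ε} g_ε(x)`. -/
theorem lyapunov_gauge_tempered_along_generator
    (G : Finset (ℝ → ℝ))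
    (hC1 : ∀ g ∈ G, ContDiff ℝ 1 g)
    (hpos : ∀ g ∈ G, ∀ y : ℝ, 0 < deriv g y)
    (hinv : ∀ g ∈ G, ∃ h ∈ G, (∀ x : ℝ, h (g x) = x) ∧ (∀ x : ℝ, g (h x) = x))
    (ε : ℝ) (hε : 0 < ε) (g : ℝ → ℝ) (hg : g ∈ G)
    (x : ℝ) (hx : expExponent G x = 0) :
    Summable (fun n : ℕ => Real.exp (-(n : ℝ) * ε) * maxExp G n x) ∧
    Summable (fun n : ℕ => Real.exp (-(n : ℝ) * ε) * maxExp G n (g x)) ∧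
    Real.exp (-ε) * (∑' n : ℕ, Real.exp (-(n : ℝ) * ε) * maxExp G n x) ≤
      deriv g x * (∑' n : ℕ, Real.exp (-(n : ℝ) * ε) * maxExp G n (g x)) ∧
    deriv g x * (∑' n : ℕ, Real.exp (-(n : ℝ) * ε) * maxExp G n (g x)) ≤
      Real.exp ε * (∑' n : ℕ, Real.exp (-(n : ℝ) * ε) * maxExp G n x) := by
  have hG : ∀ f ∈ G, Differentiable ℝ f := fun f hf => (hC1 f hf).differentiable one_ne_zero
  obtain ⟨h, hh, hhg, -⟩ := hinv g hg
  have hgx : 0 < deriv g x := hpos g hg x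
  have hup (n : ℕ) : deriv g x * maxExp G n (g x) ≤ maxExp G (n + 1) x :=
    deriv_mul_maxExp_le_maxExp_succ hG hg n x
  have hdown (n : ℕ) : maxExp G n x ≤ deriv g x * maxExp G (n + 1) (g x) :=
    maxExp_le_deriv_mul_maxExp_succ hG hg hh hhg n x hgx.le
  have hsx : Summable fun n : ℕ => exp (-(n : ℝ) * ε) * maxExp G n x :=
    summable_exp_neg_mul_of_eventually_le_exp (maxExp_nonneg G · x) (half_lt_self hε)
      (eventually_le_exp_of_limsup_log_div_eq_zero hx (half_pos hε))
  have hsy : Summable fun n : ℕ => exp (-(n : ℝ) * ε) * maxExp G n (g x) :=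
    summable_exp_neg_mul_of_mul_le_succ hgx (maxExp_nonneg G · (g x)) hup hsx
  refine ⟨hsx, hsy, ?_, by
    simpa using mul_tsum_le_exp_mul_tsum_of_mul_le_succ (d := 1) zero_le_one
      (maxExp_nonneg G 0 x) (by simpa using hup) hsy hsx⟩
  have hlow := mul_tsum_le_exp_mul_tsum_of_mul_le_succ (c := 1) hgx.le
    (maxExp_nonneg G 0 (g x)) (by simpa using hdown) hsx hsy
  calc exp (-ε) * ∑' n : ℕ, exp (-(n : ℝ) * ε) * maxExp G n x
      ≤ exp (-ε) * (exp ε * (deriv g x * ∑' n : ℕ, exp (-(n : ℝ) * ε) * maxExp G n (g x))) := by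
        gcongr
        simpa using hlow
    _ = deriv g x * ∑' n : ℕ, exp (-(n : ℝ) * ε) * maxExp G n (g x) := by
        rw [← mul_assoc, ← exp_add, neg_add_cancel, exp_zero, one_mul]
end

section
/- Let ε > 0 and c > 0, and let (μ_n)_{n≥0} and (ν_n)_{n≥0} be sequences of real numbers with μ_n ≥ 1 and ν_n ≥ 1 for all n and μ_0 = 1. Assume c·ν_n ≤ μ_{n+1} for every n ≥ 0 and μ_{n−1} ≤ c·ν_n for every n ≥ 1, and assume both series g = Σ_{n=0}^∞ e^{−nε}·μ_n and h = Σ_{n=0}^∞ e^{−nε}·ν_n converge. Then e^{−ε}·g ≤ c·h ≤ e^{ε}·g. -/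
/-- Tempering estimate for exponentially weighted sums: if `μ_n ≥ 1`, `ν_n ≥ 1`,
`μ₀ = 1`, `c·ν_n ≤ μ_{n+1}` for `n ≥ 0` and `μ_{n-1} ≤ c·ν_n` for `n ≥ 1`, and both
weighted series converge, then `e^{-ε}·g ≤ c·h ≤ e^{ε}·g` where
`g = Σ e^{-nε} μ_n` and `h = Σ e^{-nε} ν_n`. -/
theorem tempered_weighted_sums
    (ε c : ℝ) (hε : 0 < ε) (hc : 0 < c) (μ ν : ℕ → ℝ)
    (hμ : ∀ n : ℕ, 1 ≤ μ n) (hν : ∀ n : ℕ, 1 ≤ ν n) (hμ0 : μ 0 = 1)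
    (h₁ : ∀ n : ℕ, c * ν n ≤ μ (n + 1))
    (h₂ : ∀ n : ℕ, 1 ≤ n → μ (n - 1) ≤ c * ν n)
    (hg : Summable (fun n : ℕ => Real.exp (-(n : ℝ) * ε) * μ n))
    (hh : Summable (fun n : ℕ => Real.exp (-(n : ℝ) * ε) * ν n)) :
    Real.exp (-ε) * (∑' n : ℕ, Real.exp (-(n : ℝ) * ε) * μ n) ≤
      c * (∑' n : ℕ, Real.exp (-(n : ℝ) * ε) * ν n) ∧
    c * (∑' n : ℕ, Real.exp (-(n : ℝ) * ε) * ν n) ≤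
      Real.exp ε * (∑' n : ℕ, Real.exp (-(n : ℝ) * ε) * μ n) := by
  have hμpos : ∀ n, 0 < μ n := fun n => lt_of_lt_of_le one_pos (hμ n)
  have hνpos : ∀ n, 0 < ν n := fun n => lt_of_lt_of_le one_pos (hν n)
  have hch : Summable (fun n : ℕ => Real.exp (-(n : ℝ) * ε) * (c * ν n)) := by
    simpa [mul_left_comm] using hh.mul_left c
  have hch' : (c * ∑' n : ℕ, Real.exp (-(n : ℝ) * ε) * ν n)
      = ∑' n : ℕ, Real.exp (-(n : ℝ) * ε) * (c * ν n) := by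
    rw [← tsum_mul_left]; congr 1; ext n; ring
  -- shift of g-series
  have hgshift : Summable (fun n : ℕ => Real.exp (-((n : ℝ) + 1) * ε) * μ (n + 1)) := by
    have := (summable_nat_add_iff 1).2 hg
    simpa [Nat.cast_add] using this
  have hgsplit : (∑' n : ℕ, Real.exp (-(n : ℝ) * ε) * μ n)
      = Real.exp 0 * μ 0 + ∑' n : ℕ, Real.exp (-((n : ℝ) + 1) * ε) * μ (n + 1) := by
    rw [Summable.tsum_eq_zero_add hg]
    simp [Nat.cast_add]
  have hhsplit : (∑' n : ℕ, Real.exp (-(n : ℝ) * ε) * (c * ν n))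
      = Real.exp 0 * (c * ν 0) + ∑' n : ℕ, Real.exp (-((n : ℝ) + 1) * ε) * (c * ν (n + 1)) := by
    rw [Summable.tsum_eq_zero_add hch]
    simp [Nat.cast_add]
  have hhshift : Summable (fun n : ℕ => Real.exp (-((n : ℝ) + 1) * ε) * (c * ν (n + 1))) := by
    have := (summable_nat_add_iff 1).2 hch
    simpa [Nat.cast_add] using this
  constructor
  · -- lower bound
    have hterm : ∀ n : ℕ, Real.exp (-ε) * (Real.exp (-(n : ℝ) * ε) * μ n)
        ≤ Real.exp (-((n : ℝ) + 1) * ε) * (c * ν (n + 1)) := by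
      intro n
      have h := h₂ (n + 1) (Nat.le_add_left 1 n)
      simp only [Nat.add_sub_cancel] at h
      have : Real.exp (-ε) * Real.exp (-(n : ℝ) * ε) = Real.exp (-((n : ℝ) + 1) * ε) := by
        rw [← Real.exp_add]; ring_nf
      calc Real.exp (-ε) * (Real.exp (-(n : ℝ) * ε) * μ n)
          = Real.exp (-((n : ℝ) + 1) * ε) * μ n := by rw [← mul_assoc, this]
        _ ≤ Real.exp (-((n : ℝ) + 1) * ε) * (c * ν (n + 1)) :=
            mul_le_mul_of_nonneg_left h (Real.exp_nonneg _)
    calc Real.exp (-ε) * (∑' n : ℕ, Real.exp (-(n : ℝ) * ε) * μ n)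
        = ∑' n : ℕ, Real.exp (-ε) * (Real.exp (-(n : ℝ) * ε) * μ n) := by
          rw [tsum_mul_left]
      _ ≤ ∑' n : ℕ, Real.exp (-((n : ℝ) + 1) * ε) * (c * ν (n + 1)) :=
          Summable.tsum_le_tsum hterm ((hg.mul_left _)) hhshift
      _ ≤ Real.exp 0 * (c * ν 0) + ∑' n : ℕ, Real.exp (-((n : ℝ) + 1) * ε) * (c * ν (n + 1)) := by
          have : 0 ≤ Real.exp 0 * (c * ν 0) :=
            mul_nonneg (Real.exp_nonneg _) (mul_nonneg hc.le (hνpos 0).le)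
          linarith
      _ = c * ∑' n : ℕ, Real.exp (-(n : ℝ) * ε) * ν n := by rw [hch', hhsplit]
  · -- upper bound
    have hterm : ∀ n : ℕ, Real.exp (-(n : ℝ) * ε) * (c * ν n)
        ≤ Real.exp ε * (Real.exp (-((n : ℝ) + 1) * ε) * μ (n + 1)) := by
      intro n
      have : Real.exp ε * Real.exp (-((n : ℝ) + 1) * ε) = Real.exp (-(n : ℝ) * ε) := by
        rw [← Real.exp_add]; ring_nf
      calc Real.exp (-(n : ℝ) * ε) * (c * ν n)
          ≤ Real.exp (-(n : ℝ) * ε) * μ (n + 1) :=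
            mul_le_mul_of_nonneg_left (h₁ n) (Real.exp_nonneg _)
        _ = Real.exp ε * (Real.exp (-((n : ℝ) + 1) * ε) * μ (n + 1)) := by
            rw [← mul_assoc, this]
    calc c * ∑' n : ℕ, Real.exp (-(n : ℝ) * ε) * ν n
        = ∑' n : ℕ, Real.exp (-(n : ℝ) * ε) * (c * ν n) := hch'
      _ ≤ ∑' n : ℕ, Real.exp ε * (Real.exp (-((n : ℝ) + 1) * ε) * μ (n + 1)) :=
          Summable.tsum_le_tsum hterm hch (hgshift.mul_left _)
      _ = Real.exp ε * ∑' n : ℕ, Real.exp (-((n : ℝ) + 1) * ε) * μ (n + 1) := tsum_mul_left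
      _ ≤ Real.exp ε * (Real.exp 0 * μ 0 + ∑' n : ℕ, Real.exp (-((n : ℝ) + 1) * ε) * μ (n + 1)) := by
          have h0 : 0 ≤ Real.exp 0 * μ 0 := mul_nonneg (Real.exp_nonneg _) (hμpos 0).le
          have := Real.exp_nonneg ε
          nlinarith
      _ = Real.exp ε * ∑' n : ℕ, Real.exp (-(n : ℝ) * ε) * μ n := by rw [hgsplit]
end
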